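/- arXiv:2212.11193 — 6 statements merged into one kernel-verified Lean document; each statement's English description precedes it below -/
import Mathlib

section
/- Let F be a field, ω a weight function assigning nonzero scalars to permutations, and W ≤ M_n(F) a linear subspace. Then the maximal ω-rank of a matrix in W is at least ν_b(B(W)), where B(W) = {q(A) : 0 ≠ A ∈ W} is the set of lexicographically minimal support positions of nonzero matrices in W. -/
open Matrix

/-- A bipartite matching: all first coordinates distinct, all second coordinates distinct. -/
def IsBipMatching {n : ℕ} (B₀ : Finset (Fin n × Fin n)) : Prop :=
  ∀ p ∈ B₀, ∀ q ∈ B₀, p ≠ q → p.1 ≠ q.1 ∧ p.2 ≠ q.2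

/-- The bipartite matching number of a set of positions. -/
noncomputable def nuB {n : ℕ} (B : Set (Fin n × Fin n)) : ℕ :=
  sSup {m | ∃ B₀ : Finset (Fin n × Fin n), ↑B₀ ⊆ B ∧ IsBipMatching B₀ ∧ B₀.card = m}

/-- The Schur functional `D_ω`. -/
def Dw {F : Type*} [Field F] (ω : ∀ m : ℕ, Equiv.Perm (Fin m) → F) {m : ℕ}
    (A : Matrix (Fin m) (Fin m) F) : F :=
  ∑ σ : Equiv.Perm (Fin m), ω m σ * ∏ i, A i (σ i)

/-- The ω-rank: the largest k such that some k×k submatrix B has `D_ω B ≠ 0`. -/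
noncomputable def rkw {F : Type*} [Field F] (ω : ∀ m : ℕ, Equiv.Perm (Fin m) → F) {n : ℕ}
    (A : Matrix (Fin n) (Fin n) F) : ℕ :=
  sSup {k | ∃ I J : Fin k → Fin n, StrictMono I ∧ StrictMono J ∧
    Dw ω (A.submatrix I J) ≠ 0}

/-- The permanent. -/
def per {F : Type*} [Field F] {m : ℕ} (A : Matrix (Fin m) (Fin m) F) : F :=
  ∑ σ : Equiv.Perm (Fin m), ∏ i, A i (σ i)

/-- The permanental rank. -/
noncomputable def prk {F : Type*} [Field F] {n : ℕ} (A : Matrix (Fin n) (Fin n) F) : ℕ :=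
  sSup {k | ∃ I J : Fin k → Fin n, StrictMono I ∧ StrictMono J ∧
    per (A.submatrix I J) ≠ 0}

/-- Lexicographic (row-major) order on positions. -/
def LexLt {n : ℕ} (p q : Fin n × Fin n) : Prop :=
  p.1 < q.1 ∨ (p.1 = q.1 ∧ p.2 < q.2)

/-- `BW W` is the set of lexicographically minimal support positions of nonzero matrices in `W`. -/
def BW {F : Type*} [Field F] {n : ℕ} (W : Submodule F (Matrix (Fin n) (Fin n) F)) :
    Set (Fin n × Fin n) :=
  {p | ∃ A ∈ W, A ≠ 0 ∧ A p.1 p.2 ≠ 0 ∧ ∀ q, LexLt q p → A q.1 q.2 = 0}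

/-- Alternating matrix: `A = -Aᵗ` and zero diagonal. -/
def IsAlt {F : Type*} [Field F] {n : ℕ} (A : Matrix (Fin n) (Fin n) F) : Prop :=
  Aᵀ = -A ∧ ∀ i, A i i = 0

/-- A matching in a graph: pairwise disjoint edges. -/
def IsGraphMatching {n : ℕ} (M : Finset (Sym2 (Fin n))) : Prop :=
  ∀ e ∈ M, ∀ f ∈ M, e ≠ f → ∀ x : Fin n, x ∈ e → x ∉ f

/-- The matching number of a graph. -/
noncomputable def nuG {n : ℕ} (G : Set (Sym2 (Fin n))) : ℕ :=
  sSup {m | ∃ M : Finset (Sym2 (Fin n)), ↑M ⊆ G ∧ IsGraphMatching M ∧ M.card = m}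

/-- `GU U`: edges `{i,j}` arising as lexicographically minimal support positions in `U`. -/
def GU {F : Type*} [Field F] {n : ℕ} (U : Submodule F (Matrix (Fin n) (Fin n) F)) :
    Set (Sym2 (Fin n)) :=
  {e | ∃ A ∈ U, ∃ i j : Fin n, A ≠ 0 ∧ A i j ≠ 0 ∧
    (∀ q : Fin n × Fin n, LexLt q (i, j) → A q.1 q.2 = 0) ∧ e = Sym2.mk i j}

/-!
Sort the rows and the columns of a matching in `B(W)`, so that its positions become
`(I k, J (t k))` for a permutation `t`, and pick `A k ∈ W` with `q(A k) = (I k, J (t k))`.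
On the submatrix `I × J`, `A k` vanishes in the rows above `k`, and left of column `t k` in row `k`.

Write `D_ω` as a sum over all maps `σ` from rows to columns, with weight `ω σ` on permutations and
`0` elsewhere. A permutation that is pointwise `≥ t` equals `t`, so `t` is the only map `≥ t` of
nonzero weight. Expanding along the last row, `D(C' + A_last) = D(C') + D'(C')` whenever `C'`
is a combination of the other `A k`, where `D'` is a functional on the remaining rows whose weight
has the same property at `t` with its last entry removed: the entries of `A_last` left of its
pivot vanish, and the others only pair with maps `≥ t`. By induction some `C'` has `D'(C') ≠ 0`,
so `C'` or `C' + A_last` has `D ≠ 0`. No genericity is needed, so this works over every field.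
-/

section TransversalSum

variable {F : Type*} [CommSemiring F] {m M : ℕ}

def transversalSum (w : (Fin m → Fin M) → F) (C : Matrix (Fin m) (Fin M) F) : F :=
  ∑ σ, w σ * ∏ i, C i (σ i)

def contractLast (w : (Fin (m + 1) → Fin M) → F) (a : Fin M → F) : (Fin m → Fin M) → F :=
  fun σ => ∑ j, w (Fin.snoc σ j) * a j

theorem transversalSum_succ (w : (Fin (m + 1) → Fin M) → F) (C : Matrix (Fin (m + 1)) (Fin M) F) :
    transversalSum w C =
      transversalSum (contractLast w (C (Fin.last m))) (C.submatrix Fin.castSucc id) := by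
  simp only [transversalSum, contractLast, Matrix.submatrix_apply, id, Finset.sum_mul]
  rw [← (Fin.snocEquiv fun _ => Fin M).sum_comp, Fintype.sum_prod_type, Finset.sum_comm]
  refine Finset.sum_congr rfl fun σ _ => Finset.sum_congr rfl fun j _ => ?_
  simp only [Fin.snocEquiv, Equiv.coe_fn_mk, Fin.prod_univ_castSucc, Fin.snoc_castSucc,
    Fin.snoc_last]
  ring

theorem transversalSum_add_weight (w₁ w₂ : (Fin m → Fin M) → F) (C : Matrix (Fin m) (Fin M) F) :
    transversalSum (w₁ + w₂) C = transversalSum w₁ C + transversalSum w₂ C := by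
  simp only [transversalSum, Pi.add_apply, add_mul, Finset.sum_add_distrib]

theorem contractLast_add (w : (Fin (m + 1) → Fin M) → F) (a b : Fin M → F) :
    contractLast w (a + b) = contractLast w a + contractLast w b := by
  ext σ
  simp only [contractLast, Pi.add_apply, mul_add, Finset.sum_add_distrib]

theorem transversalSum_add_of_castSucc_eq_zero (w : (Fin (m + 1) → Fin M) → F)
    (C D : Matrix (Fin (m + 1)) (Fin M) F) (hD : ∀ i : Fin m, D i.castSucc = 0) :
    transversalSum w (C + D) =
      transversalSum w C + transversalSum (contractLast w (D (Fin.last m)))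
        (C.submatrix Fin.castSucc id) := by
  have hCD : (C + D).submatrix Fin.castSucc id = C.submatrix Fin.castSucc id := by
    ext i j
    simp [hD]
  have hlast : (C + D) (Fin.last m) = C (Fin.last m) + D (Fin.last m) := rfl
  rw [transversalSum_succ, transversalSum_succ w C, hCD, hlast, contractLast_add,
    transversalSum_add_weight]

end TransversalSum

theorem Fin.le_snoc {m : ℕ} {α : Type*} [Preorder α] {q : Fin (m + 1) → α} {p : Fin m → α}
    {x : α} : q ≤ Fin.snoc p x ↔ Fin.init q ≤ p ∧ q (Fin.last m) ≤ x :=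
  Fin.forall_fin_succ'.trans <| by simp [Pi.le_def, Fin.init]

def IsLeadingAt {F : Type*} [Zero F] {m M : ℕ} (w : (Fin m → Fin M) → F) (t : Fin m → Fin M) :
    Prop :=
  w t ≠ 0 ∧ ∀ σ, t < σ → w σ = 0

section Leading

variable {F : Type*} [CommSemiring F] [NoZeroDivisors F] {m M : ℕ}

theorem IsLeadingAt.contractLast {w : (Fin (m + 1) → Fin M) → F} {t : Fin (m + 1) → Fin M}
    (hw : IsLeadingAt w t) {a : Fin M → F} (ha : ∀ j < t (Fin.last m), a j = 0)
    (hat : a (t (Fin.last m)) ≠ 0) : IsLeadingAt (contractLast w a) (Fin.init t) := by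
  have hvanish : ∀ σ, Fin.init t ≤ σ → ∀ j, (σ, j) ≠ (Fin.init t, t (Fin.last m)) →
      w (Fin.snoc σ j) * a j = 0 := by
    intro σ hσ j hne
    rcases lt_or_ge j (t (Fin.last m)) with hj | hj
    · rw [ha j hj, mul_zero]
    · refine mul_eq_zero_of_left (hw.2 _ <| lt_of_le_of_ne (Fin.le_snoc.2 ⟨hσ, hj⟩) ?_) _
      rintro h
      rw [← Fin.snoc_init_self t, Fin.snoc_inj] at h
      exact hne (Prod.ext h.1.symm h.2.symm)
  constructor
  · rw [_root_.contractLast, Finset.sum_eq_single (t (Fin.last m))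
      (fun j _ hj => hvanish _ le_rfl j (by simp [hj])) (by simp), Fin.snoc_init_self]
    exact mul_ne_zero hw.1 hat
  · intro σ hσ
    exact Finset.sum_eq_zero fun j _ => hvanish σ hσ.le j (by simp [hσ.ne'])

theorem exists_transversalSum_ne_zero {w : (Fin m → Fin M) → F} {t : Fin m → Fin M}
    (hw : IsLeadingAt w t) (B : Fin m → Matrix (Fin m) (Fin M) F)
    (hB_above : ∀ k i, i < k → B k i = 0) (hB_left : ∀ k j, j < t k → B k k j = 0)
    (hB_pivot : ∀ k, B k k (t k) ≠ 0) :
    ∃ c : Fin m → F, transversalSum w (∑ k, c k • B k) ≠ 0 := by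
  induction m with
  | zero =>
    refine ⟨0, ?_⟩
    simpa [transversalSum, Subsingleton.elim _ t] using hw.1
  | succ m ih =>
    set L := Fin.last m
    obtain ⟨c', hc'⟩ := ih (hw.contractLast (hB_left L) (hB_pivot L))
      (fun k => (B k.castSucc).submatrix Fin.castSucc id)
      (fun k i hik => funext fun j => by
        simp [hB_above _ _ (Fin.castSucc_lt_castSucc_iff.2 hik)])
      (fun k j hj => hB_left _ _ hj) (fun k => hB_pivot _)
    set C' := ∑ k : Fin m, c' k • B k.castSucc
    have hC' : C'.submatrix Fin.castSucc id =
        ∑ k, c' k • (B k.castSucc).submatrix Fin.castSucc id := by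
      ext i j
      simp [C', Matrix.sum_apply]
    have hsplit := transversalSum_add_of_castSucc_eq_zero w C' (B L)
      fun i => hB_above L _ (Fin.castSucc_lt_last i)
    by_cases h : transversalSum w C' = 0
    · refine ⟨Fin.snoc c' 1, ?_⟩
      simpa [Fin.sum_univ_castSucc, C', L, hsplit, h, hC'] using hc'
    · refine ⟨Fin.snoc c' 0, ?_⟩
      simpa [Fin.sum_univ_castSucc, C'] using h

end Leading

theorem Equiv.Perm.eq_of_coe_le {m : ℕ} {σ τ : Equiv.Perm (Fin m)} (h : ⇑σ ≤ ⇑τ) : σ = τ := by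
  have hsum : ∑ i, (σ i : ℕ) = ∑ i, (τ i : ℕ) := by
    rw [Equiv.sum_comp σ (fun i => (i : ℕ)), Equiv.sum_comp τ (fun i => (i : ℕ))]
  have hle : ∀ i ∈ Finset.univ, (σ i : ℕ) ≤ τ i := fun i _ => h i
  exact Equiv.ext fun i => Fin.ext <| (Finset.sum_eq_sum_iff_of_le hle).1 hsum i (Finset.mem_univ i)

section PermWeight

variable {F : Type*} {m : ℕ}

def permWeight [AddCommMonoid F] (ω : Equiv.Perm (Fin m) → F) : (Fin m → Fin m) → F :=
  fun σ => ∑ e : Equiv.Perm (Fin m), if ⇑e = σ then ω e else 0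

theorem transversalSum_permWeight [Field F] (ω : ∀ m : ℕ, Equiv.Perm (Fin m) → F)
    (C : Matrix (Fin m) (Fin m) F) : transversalSum (permWeight (ω m)) C = Dw ω C := by
  simp only [transversalSum, permWeight, Dw, Finset.sum_mul, ite_mul, zero_mul]
  rw [Finset.sum_comm]
  simp

theorem isLeadingAt_permWeight [AddCommMonoid F] {ω : Equiv.Perm (Fin m) → F}
    (hω : ∀ e, ω e ≠ 0) (t : Equiv.Perm (Fin m)) : IsLeadingAt (permWeight ω) t := by
  refine ⟨by simpa [permWeight, DFunLike.coe_fn_eq] using hω t, fun σ hσ => ?_⟩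
  refine Finset.sum_eq_zero fun e _ => if_neg ?_
  rintro rfl
  exact hσ.ne (congrArg _ (Equiv.Perm.eq_of_coe_le hσ.le))

end PermWeight

theorem IsBipMatching.exists_strictMono_perm {n : ℕ} {B₀ : Finset (Fin n × Fin n)}
    (h : IsBipMatching B₀) : ∃ (I J : Fin B₀.card → Fin n) (t : Equiv.Perm (Fin B₀.card)),
      StrictMono I ∧ StrictMono J ∧ ∀ k, (I k, J (t k)) ∈ B₀ := by
  have hfst : Set.InjOn Prod.fst (B₀ : Set (Fin n × Fin n)) :=
    fun p hp q hq hpq => by_contra fun hne => (h p hp q hq hne).1 hpq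
  have hsnd : Set.InjOn Prod.snd (B₀ : Set (Fin n × Fin n)) :=
    fun p hp q hq hpq => by_contra fun hne => (h p hp q hq hne).2 hpq
  set I := (B₀.image Prod.fst).orderEmbOfFin (Finset.card_image_of_injOn hfst)
  set J := (B₀.image Prod.snd).orderEmbOfFin (Finset.card_image_of_injOn hsnd)
  have hrow : ∀ k, ∃ p ∈ B₀, p.1 = I k :=
    fun k => Finset.mem_image.1 (Finset.orderEmbOfFin_mem _ _ k)
  choose p hp hp_fst using hrow
  have hcol : ∀ k, (p k).2 ∈ Set.range J := fun k => by
    rw [Finset.range_orderEmbOfFin, Finset.coe_image]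
    exact Set.mem_image_of_mem _ (hp k)
  choose t ht using hcol
  have ht_inj : Function.Injective t := fun k k' hkk' => by
    have hpp : p k = p k' := hsnd (hp k) (hp k') (by rw [← ht, ← ht, hkk'])
    exact I.injective (by rw [← hp_fst, ← hp_fst, hpp])
  refine ⟨I, J, Equiv.ofBijective t (Finite.injective_iff_bijective.1 ht_inj), I.strictMono,
    J.strictMono, fun k => ?_⟩
  simpa [← hp_fst, ht] using hp k

theorem exists_dw_submatrix_ne_zero {F : Type*} [Field F] {n : ℕ}
    {ω : ∀ m : ℕ, Equiv.Perm (Fin m) → F} (hω : ∀ m σ, ω m σ ≠ 0)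
    {W : Submodule F (Matrix (Fin n) (Fin n) F)} {B₀ : Finset (Fin n × Fin n)}
    (hB₀ : ↑B₀ ⊆ BW W) (hmatch : IsBipMatching B₀) :
    ∃ A ∈ W, ∃ I J : Fin B₀.card → Fin n, StrictMono I ∧ StrictMono J ∧
      Dw ω (A.submatrix I J) ≠ 0 := by
  obtain ⟨I, J, t, hI, hJ, hIJ⟩ := hmatch.exists_strictMono_perm
  choose A hAW _ hA_pivot hA_before using fun k => hB₀ (hIJ k)
  obtain ⟨c, hc⟩ := exists_transversalSum_ne_zero (isLeadingAt_permWeight (hω _) t)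
    (fun k => (A k).submatrix I J)
    (fun k i hik => funext fun j => hA_before k (I i, J j) (Or.inl (hI hik)))
    (fun k j hj => hA_before k (I k, J j) (Or.inr ⟨rfl, hJ hj⟩)) hA_pivot
  refine ⟨∑ k, c k • A k, sum_mem fun k _ => W.smul_mem _ (hAW k), I, J, hI, hJ, ?_⟩
  rw [← transversalSum_permWeight]
  convert hc using 2
  ext i j
  simp [Matrix.sum_apply]

section OmegaRank

variable {F : Type*} [Field F] {n : ℕ} (ω : ∀ m : ℕ, Equiv.Perm (Fin m) → F)

theorem rkw_le (A : Matrix (Fin n) (Fin n) F) : rkw ω A ≤ n :=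
  csSup_le' fun _ ⟨I, _, hI, _⟩ => Fin.le_of_injective I hI.injective

theorem le_rkw {A : Matrix (Fin n) (Fin n) F} {k : ℕ} {I J : Fin k → Fin n} (hI : StrictMono I)
    (hJ : StrictMono J) (hA : Dw ω (A.submatrix I J) ≠ 0) : k ≤ rkw ω A :=
  le_csSup ⟨n, fun _ ⟨I', _, hI', _⟩ => Fin.le_of_injective I' hI'.injective⟩ ⟨I, J, hI, hJ, hA⟩

end OmegaRank

theorem stmt2 {F : Type*} [Field F] {n : ℕ}
    (ω : ∀ m : ℕ, Equiv.Perm (Fin m) → F) (hω : ∀ m σ, ω m σ ≠ 0)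
    (W : Submodule F (Matrix (Fin n) (Fin n) F)) :
    nuB (BW W) ≤ sSup {r | ∃ A ∈ W, rkw ω A = r} := by
  have hbdd : BddAbove {r | ∃ A ∈ W, rkw ω A = r} := ⟨n, by rintro _ ⟨A, -, rfl⟩; exact rkw_le ω A⟩
  refine csSup_le' ?_
  rintro _ ⟨B₀, hB₀, hmatch, rfl⟩
  obtain ⟨A, hAW, I, J, hI, hJ, hA⟩ := exists_dw_submatrix_ne_zero hω hB₀ hmatch
  exact (le_rkw ω hI hJ hA).trans (le_csSup hbdd ⟨A, hAW, rfl⟩)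
end

section
/- Let F be a field and W ≤ M_n(F) a linear subspace. Then the maximal usual rank of a matrix in W is at least ν_b(B(W)), where B(W) is the set of lexicographically minimal support positions of nonzero matrices in W. -/
open Matrix

/-! Take a matching `(r_k, c_k)` in `B(W)` and matrices `A_k ∈ W` with these leading positions.
In the submatrix on rows `r` and columns `c`, `A_k` vanishes on the rows before `r_k` and, in row
`r_k`, on the columns before `c_k`. Expanding `det (∑_{k ∈ S} A_k)[r, c]` multilinearly in the rows
and summing over `S` with signs `(-1)^|Sᶜ|` keeps exactly the terms in which every `A_k` supplies one
row. The row condition kills all of them but the one where `A_k` supplies row `r_k`, and that matrix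
is triangular after sorting the columns by `c`, with nonzero diagonal. So some `∑_{k ∈ S} A_k ∈ W`
has a nonsingular square submatrix as large as the matching; using only `0/1` combinations makes
this work over every field. -/

open Finset Function

theorem Equiv.Perm.eq_one_of_forall_apply_le {ι α : Type*} [Fintype ι] [LinearOrder α]
    {g : ι → α} (hg : Injective g) {σ : Equiv.Perm ι} (h : ∀ i, g (σ i) ≤ g i) : σ = 1 := by
  classical
  by_contra hσ
  obtain ⟨i₀, hi₀⟩ : ∃ i, σ i ≠ i := by
    by_contra! hfix
    exact hσ (Equiv.ext hfix)
  -- a moved point of maximal `g`-value has a moved preimage, which `σ` does not lower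
  obtain ⟨i, hi, hmax⟩ := exists_max_image {i | σ i ≠ i} g ⟨i₀, by simpa using hi₀⟩
  rw [mem_filter_univ] at hi
  set j := σ.symm i
  have hij : σ j = i := σ.apply_symm_apply i
  have hj : σ j ≠ j := fun h => hi (h.symm.trans hij ▸ h)
  have hgij : g i = g j := le_antisymm (hij ▸ h j) (hmax j (by simpa using hj))
  exact hj (by rw [hij, hg hgij])

theorem Matrix.BlockTriangular.det_eq_prod_diag_of_injective {R ι α : Type*} [CommRing R]
    [Fintype ι] [DecidableEq ι] [LinearOrder α] {M : Matrix ι ι R} {g : ι → α}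
    (hM : M.BlockTriangular g) (hg : Injective g) : M.det = ∏ i, M i i := by
  rw [Matrix.det_apply, sum_eq_single 1 (fun σ _ hσ => ?_) (by simp)]
  · simp
  obtain ⟨i, hi⟩ : ∃ i, g i < g (σ i) := by
    by_contra! h
    exact hσ (Equiv.Perm.eq_one_of_forall_apply_le hg h)
  rw [prod_eq_zero (f := fun j => M (σ j) j) (mem_univ i) (hM hi), smul_zero]

theorem Finset.sum_powerset_filter_superset_neg_one_pow_card_compl {R α : Type*} [CommRing R]
    [Fintype α] [DecidableEq α] (T : Finset α) :
    ∑ S ∈ univ.powerset with T ⊆ S, (-1 : R) ^ #Sᶜ = if T = univ then 1 else 0 := by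
  have hcompl : ∑ S ∈ univ.powerset with T ⊆ S, (-1 : R) ^ #Sᶜ
      = ∑ U ∈ Tᶜ.powerset, (-1 : R) ^ #U :=
    sum_nbij' compl compl (by simp) (by simp [subset_compl_comm])
      (by simp) (by simp) (by simp)
  have h := congrArg (Int.cast : ℤ → R) (sum_powerset_neg_one_pow_card (x := Tᶜ))
  push_cast at h
  simp only [hcompl, h, compl_eq_empty_iff]

theorem Matrix.det_sum_eq_sum_piFinset {R ι κ : Type*} [CommRing R] [Fintype ι] [DecidableEq ι]
    (M : κ → Matrix ι ι R) (S : Finset κ) :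
    (∑ k ∈ S, M k).det =
      ∑ φ ∈ Fintype.piFinset fun _ : ι => S, (Matrix.of fun i => M (φ i) i).det := by
  have hrows : ∑ k ∈ S, M k = fun i => ∑ k ∈ S, M k i := by
    ext i j
    simp [Matrix.sum_apply]
  rw [hrows]
  exact (Matrix.detRowAlternating (R := R) (n := ι)).map_sum_finset (fun i k => M k i) _

theorem Matrix.sum_powerset_neg_one_pow_mul_det_sum {R ι : Type*} [CommRing R] [Fintype ι]
    [DecidableEq ι] (M : ι → Matrix ι ι R) :
    ∑ S ∈ (univ : Finset ι).powerset, (-1 : R) ^ #Sᶜ * (∑ k ∈ S, M k).det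
      = ∑ σ : Equiv.Perm ι, (Matrix.of fun i => M (σ i) i).det := by
  set D : (ι → ι) → R := fun φ => (Matrix.of fun i => M (φ i) i).det
  have hpi : ∀ S : Finset ι,
      Fintype.piFinset (fun _ : ι => S) = ({φ | image φ univ ⊆ S} : Finset (ι → ι)) := fun S => by
    ext φ
    simp [image_subset_iff]
  calc ∑ S ∈ (univ : Finset ι).powerset, (-1 : R) ^ #Sᶜ * (∑ k ∈ S, M k).det
      = ∑ S ∈ (univ : Finset ι).powerset, ∑ φ : ι → ι,
          (if image φ univ ⊆ S then (-1 : R) ^ #Sᶜ else 0) * D φ := by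
        refine sum_congr rfl fun S _ => ?_
        rw [Matrix.det_sum_eq_sum_piFinset, hpi, sum_filter, mul_sum]
        exact sum_congr rfl fun φ _ => by split_ifs <;> simp [D]
    _ = ∑ φ : ι → ι, (if image φ univ = univ then D φ else 0) := by
        rw [sum_comm]
        refine sum_congr rfl fun φ _ => ?_
        rw [← sum_mul, ← sum_filter, sum_powerset_filter_superset_neg_one_pow_card_compl, ite_mul,
          one_mul, zero_mul]
    _ = ∑ σ : Equiv.Perm ι, D σ := by
        rw [← sum_filter]
        refine sum_bij' (fun φ hφ => Equiv.ofBijective φ ?_) (fun σ _ => σ) (by simp) ?_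
          (fun _ _ => rfl) (fun _ _ => Equiv.ext fun _ => rfl) (fun _ _ => rfl)
        · rw [mem_filter_univ, eq_univ_iff_forall] at hφ
          exact Finite.surjective_iff_bijective.mp fun i => by simpa using hφ i
        · intro σ _
          simp only [mem_filter_univ, eq_univ_iff_forall, mem_image, mem_univ, true_and]
          exact σ.surjective

theorem Matrix.exists_det_sum_ne_zero_of_triangular {R ι α β : Type*} [CommRing R] [IsDomain R]
    [Fintype ι] [DecidableEq ι] [LinearOrder α] [LinearOrder β] (M : ι → Matrix ι ι R)
    {r : ι → α} {c : ι → β} (hr : Injective r) (hc : Injective c)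
    (hrow : ∀ k i, r i < r k → M k i = 0) (hcol : (Matrix.of fun k => M k k).BlockTriangular c)
    (hdiag : ∀ k, M k k k ≠ 0) :
    ∃ S : Finset ι, (∑ k ∈ S, M k).det ≠ 0 := by
  have hperm : ∀ σ : Equiv.Perm ι, σ ≠ 1 → (Matrix.of fun i => M (σ i) i).det = 0 := by
    intro σ hσ
    obtain ⟨i, hi⟩ : ∃ i, r i < r (σ i) := by
      by_contra! h
      exact hσ (Equiv.Perm.eq_one_of_forall_apply_le hr h)
    exact Matrix.det_eq_zero_of_row_eq_zero i (congrFun (hrow (σ i) i hi))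
  have hsum : ∑ S ∈ (univ : Finset ι).powerset, (-1 : R) ^ #Sᶜ * (∑ k ∈ S, M k).det ≠ 0 := by
    rw [Matrix.sum_powerset_neg_one_pow_mul_det_sum, sum_eq_single 1 (fun σ _ => hperm σ)
      (by simp)]
    simp only [Equiv.Perm.one_apply]
    rw [hcol.det_eq_prod_diag_of_injective hc]
    exact prod_ne_zero_iff.mpr fun k _ => hdiag k
  obtain ⟨S, -, hS⟩ := exists_ne_zero_of_sum_ne_zero hsum
  exact ⟨S, right_ne_zero_of_mul hS⟩

theorem Matrix.card_le_rank_of_det_submatrix_ne_zero {K m n ι : Type*} [Field K] [Fintype n]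
    [Fintype ι] [DecidableEq ι] (A : Matrix m n K) (r : ι → m) (c : ι → n)
    (h : (A.submatrix r c).det ≠ 0) : Fintype.card ι ≤ A.rank := by
  rw [← Matrix.rank_of_isUnit _ ((Matrix.isUnit_iff_isUnit_det _).mpr h.isUnit)]
  exact Matrix.rank_submatrix_le A r c

theorem IsBipMatching.injective_fst {n : ℕ} {B₀ : Finset (Fin n × Fin n)} (h : IsBipMatching B₀) :
    Injective fun p : B₀ => p.1.1 := fun p q hpq =>
  Subtype.ext (by_contra fun hne => (h p p.2 q q.2 hne).1 hpq)

theorem IsBipMatching.injective_snd {n : ℕ} {B₀ : Finset (Fin n × Fin n)} (h : IsBipMatching B₀) :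
    Injective fun p : B₀ => p.1.2 := fun p q hpq =>
  Subtype.ext (by_contra fun hne => (h p p.2 q q.2 hne).2 hpq)

theorem exists_card_le_rank_sum_of_lexLeading {F ι : Type*} [Field F] [Fintype ι] {n : ℕ}
    (A : ι → Matrix (Fin n) (Fin n) F) (p : ι → Fin n × Fin n)
    (hrow : Injective fun k => (p k).1) (hcol : Injective fun k => (p k).2)
    (hlead : ∀ k, A k (p k).1 (p k).2 ≠ 0) (hlex : ∀ k q, LexLt q (p k) → A k q.1 q.2 = 0) :
    ∃ S : Finset ι, Fintype.card ι ≤ (∑ k ∈ S, A k).rank := by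
  classical
  obtain ⟨S, hS⟩ := Matrix.exists_det_sum_ne_zero_of_triangular
    (fun k => (A k).submatrix (fun i => (p i).1) (fun j => (p j).2)) hrow hcol
    (fun k i hi => funext fun j => hlex k ((p i).1, (p j).2) (Or.inl hi))
    (fun k j hj => hlex k ((p k).1, (p j).2) (Or.inr ⟨rfl, hj⟩)) hlead
  refine ⟨S, Matrix.card_le_rank_of_det_submatrix_ne_zero _ (fun i => (p i).1) (fun j => (p j).2)
    ?_⟩
  convert hS using 2
  ext
  simp [Matrix.sum_apply]

theorem stmt3 {F : Type*} [Field F] {n : ℕ}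
    (W : Submodule F (Matrix (Fin n) (Fin n) F)) :
    nuB (BW W) ≤ sSup {r | ∃ A ∈ W, A.rank = r} := by
  refine csSup_le ⟨0, ∅, by simp, by simp [IsBipMatching], rfl⟩ ?_
  rintro _ ⟨B₀, hB, hmatch, rfl⟩
  choose A hAW _ hlead hlex using fun p : B₀ => hB p.2
  obtain ⟨S, hS⟩ := exists_card_le_rank_sum_of_lexLeading A Subtype.val hmatch.injective_fst
    hmatch.injective_snd hlead hlex
  have hbdd : BddAbove {r | ∃ A ∈ W, A.rank = r} :=
    ⟨n, by rintro _ ⟨A, -, rfl⟩; exact A.rank_le_width⟩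
  calc B₀.card = Fintype.card B₀ := (Fintype.card_coe B₀).symm
    _ ≤ (∑ k ∈ S, A k).rank := hS
    _ ≤ sSup {r | ∃ A ∈ W, A.rank = r} :=
      le_csSup hbdd ⟨_, Submodule.sum_mem W fun k _ => hAW k, rfl⟩
end

section
/- Let F be a field, B ⊆ [n]×[n], and k ≥ 0. The maximum dimension of a linear subspace W ≤ M_B(F) with rank(A) ≤ k for all A ∈ W equals the maximum of |B'| over subsets B' ⊆ B with bipartite matching number ν_b(B') ≤ k. -/
open Matrix

/-!
If every element of `W` has rank at most `k`, record for each nonzero `A ∈ W` its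
lexicographically first nonzero position; these positions `BW W` lie in `B`, and there are at
least `dim W` of them, since no nonzero matrix of `W` vanishes on all of them. Given a matching
`p₁, …, p_m` in `BW W` sorted by rows, pick `Aᵢ ∈ W` led by `pᵢ`. On the `m × m` submatrix at the
matched rows and columns, `Aₜ` vanishes on the rows before row `t`, and the diagonal choice
`i ↦ row i of Aᵢ` is triangular with nonzero diagonal. Inclusion–exclusion over `S ⊆ [m]` isolates
from `det (∑_{t ∈ S} Aₜ)` the terms using every `Aₜ` once, so one of these sums has a nonsingular
`m × m` minor and `m ≤ k`. Conversely, all matrices supported on `B'` form a space of dimension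
`|B'|`, and a nonzero term in the expansion of a nonsingular minor of size `rank A` is a matching
in the support of `A`.
-/

open Finset Function

section InclusionExclusion

variable {R M N ι κ : Type*} [CommSemiring R] [AddCommMonoid M] [Module R M] [AddCommGroup N]
  [Module R N] [Fintype ι] [DecidableEq ι] [Fintype κ] [DecidableEq κ]

theorem sum_superset_neg_one_pow_card_compl (T : Finset κ) :
    ∑ S ∈ univ.powerset with T ⊆ S, (-1 : ℤ) ^ #Sᶜ = if T = univ then 1 else 0 := by
  have : ∑ S ∈ univ.powerset with T ⊆ S, (-1 : ℤ) ^ #Sᶜ = ∑ U ∈ Tᶜ.powerset, (-1 : ℤ) ^ #U :=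
    sum_nbij' compl compl (by simp) (by simp [subset_compl_comm]) (by simp) (by simp) (by simp)
  simp_rw [this, sum_powerset_neg_one_pow_card, compl_eq_empty_iff]

theorem MultilinearMap.sum_powerset_neg_one_pow_smul_map_sum
    (f : MultilinearMap R (fun _ : ι => M) N) (v : κ → ι → M) :
    ∑ S ∈ univ.powerset, (-1 : ℤ) ^ #Sᶜ • f (fun i => ∑ t ∈ S, v t i)
      = ∑ g : ι → κ with Surjective g, f (fun i => v (g i) i) := by
  calc _ = ∑ S ∈ univ.powerset, ∑ g ∈ Fintype.piFinset fun _ => S,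
        (-1 : ℤ) ^ #Sᶜ • f (fun i => v (g i) i) := by
        simp_rw [f.map_sum_finset, smul_sum]
    _ = ∑ g : ι → κ, ∑ S ∈ univ.powerset with univ.image g ⊆ S,
        (-1 : ℤ) ^ #Sᶜ • f (fun i => v (g i) i) :=
        sum_comm' fun S g => by simp [image_subset_iff]
    _ = _ := by
        simp_rw [← sum_smul, sum_superset_neg_one_pow_card_compl, ite_smul, one_smul, zero_smul,
          ← sum_filter]
        congr! 2 with g
        simp [eq_univ_iff_forall, Surjective]

end InclusionExclusion

theorem Fin.eq_id_of_bijective_of_forall_le {m : ℕ} {f : Fin m → Fin m} (hf : Bijective f)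
    (hle : ∀ i, f i ≤ i) : f = id := by
  have hsum : ∑ i : Fin m, (f i : ℕ) = ∑ i : Fin m, (i : ℕ) := hf.sum_comp fun i => (i : ℕ)
  funext i
  exact Fin.ext ((sum_eq_sum_iff_of_le fun i _ => Fin.le_iff_val_le_val.mp (hle i)).mp hsum i
    (mem_univ i))

theorem exists_linearIndependent_comp_fin {K V ι : Type*} [Field K] [AddCommGroup V] [Module K V]
    [FiniteDimensional K V] (v : ι → V) {r : ℕ}
    (hr : r ≤ Module.finrank K (Submodule.span K (Set.range v))) :
    ∃ J : Fin r → ι, LinearIndependent K (v ∘ J) := by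
  obtain ⟨κ, a, -, hspan, hli⟩ := exists_linearIndependent' K v
  have := hli.finite
  let := Fintype.ofFinite κ
  have hcard : r ≤ Fintype.card κ := by
    rwa [linearIndependent_iff_card_eq_finrank_span.mp hli, Set.finrank, hspan]
  obtain ⟨e⟩ := Function.Embedding.nonempty_of_card_le (α := Fin r) (β := κ)
    (by simpa using hcard)
  exact ⟨a ∘ e, hli.comp e e.injective⟩

namespace Matrix

theorem BlockTriangular.det_eq_prod_diag {R m α : Type*} [CommRing R] [Fintype m]
    [DecidableEq m] [LinearOrder α] {M : Matrix m m R} {b : m → α} (hM : M.BlockTriangular b)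
    (hb : Injective b) : M.det = ∏ i, M i i := by
  let : LinearOrder m := LinearOrder.lift' b hb
  exact det_of_isUpperTriangular fun i j hij => hM hij

theorem exists_det_sum_ne_zero {R : Type*} [CommRing R] {m : ℕ}
    (M : Fin m → Matrix (Fin m) (Fin m) R) (hM : ∀ t i, i < t → M t i = 0)
    (hdiag : (of fun i => M i i).det ≠ 0) :
    ∃ S : Finset (Fin m), (∑ t ∈ S, M t).det ≠ 0 := by
  by_contra! h
  have key := (detRowAlternating : (Fin m → R) [⋀^Fin m]→ₗ[R] R).toMultilinearMap
    |>.sum_powerset_neg_one_pow_smul_map_sum M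
  have hsum : ∀ S : Finset (Fin m), (fun i => ∑ t ∈ S, M t i) = ∑ t ∈ S, M t := fun S => by
    ext i j; simp [Matrix.sum_apply]
  have hoff : ∀ g : Fin m → Fin m, g ∈ ({g | Surjective g} : Finset _) → g ≠ id →
      (of fun i => M (g i) i).det = 0 := by
    intro g hg hne
    obtain ⟨i, hi⟩ : ∃ i, i < g i := by
      by_contra! hle
      exact hne (Fin.eq_id_of_bijective_of_forall_le
        (Finite.surjective_iff_bijective.mp (mem_filter.mp hg).2) hle)
    exact det_eq_zero_of_row_eq_zero i fun j => by simp [hM _ _ hi]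
  simp only [AlternatingMap.coe_multilinearMap, hsum] at key
  change ∑ S ∈ _, _ • (∑ t ∈ S, M t).det =
    ∑ g : Fin m → Fin m with Surjective g, (of fun i => M (g i) i).det at key
  rw [sum_eq_single_of_mem id (by simpa using surjective_id) hoff] at key
  exact hdiag (key.symm.trans (sum_eq_zero fun S _ => by simp [h S]))

theorem exists_det_submatrix_ne_zero {K m n : Type*} [Field K] [Fintype m] [Fintype n]
    (A : Matrix m n K) :
    ∃ (r : Fin A.rank → m) (c : Fin A.rank → n), (A.submatrix r c).det ≠ 0 := by
  obtain ⟨c, hc⟩ := exists_linearIndependent_comp_fin A.col (A.rank_eq_finrank_span_cols).le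
  have hrank : (A.submatrix id c).rank = A.rank := by
    rw [← rank_transpose, LinearIndependent.rank_matrix (M := (A.submatrix id c)ᵀ) hc,
      Fintype.card_fin]
  obtain ⟨r, hr⟩ := exists_linearIndependent_comp_fin (A.submatrix id c).row
    (hrank.symm.trans (A.submatrix id c).rank_eq_finrank_span_row).le
  exact ⟨r, c, ((isUnit_iff_isUnit_det _).mp (linearIndependent_rows_iff_isUnit.mp hr)).ne_zero⟩

theorem exists_perm_forall_ne_zero_of_det_ne_zero {R m : Type*} [CommRing R] [Fintype m]
    [DecidableEq m] {M : Matrix m m R} (h : M.det ≠ 0) : ∃ σ : Equiv.Perm m, ∀ i, M (σ i) i ≠ 0 := by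
  contrapose! h
  rw [det_apply]
  refine sum_eq_zero fun σ _ => ?_
  obtain ⟨i, hi⟩ := h σ
  rw [prod_eq_zero (f := fun i => M (σ i) i) (mem_univ i) hi, smul_zero]

section SupportedOn

variable {m n : Type*}

def supportedOn (R : Type*) [Semiring R] (s : Set (m × n)) : Submodule R (Matrix m n R) where
  carrier := {A | ∀ i j, (i, j) ∉ s → A i j = 0}
  add_mem' hA hB i j h := by simp [hA i j h, hB i j h]
  zero_mem' _ _ _ := rfl
  smul_mem' c A hA i j h := by simp [hA i j h]

theorem supportedOn_mono {R : Type*} [Semiring R] {s t : Set (m × n)} (h : s ⊆ t) :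
    supportedOn R s ≤ supportedOn R t :=
  fun _ hA i j hij => hA i j fun hs => hij (h hs)

noncomputable def supportedOnEquiv {R : Type*} [Semiring R] (s : Set (m × n)) :
    supportedOn R s ≃ₗ[R] (s → R) where
  toFun A p := A.1 p.1.1 p.1.2
  map_add' _ _ := rfl
  map_smul' _ _ := rfl
  invFun v := ⟨of fun i j => open Classical in if h : (i, j) ∈ s then v ⟨(i, j), h⟩ else 0,
    fun i j h => by simp [h]⟩
  left_inv A := by
    ext i j
    by_cases h : (i, j) ∈ s
    · simp [h]
    · simp [h, A.2 i j h]
  right_inv v := by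
    ext p
    simp

theorem finrank_supportedOn {K : Type*} [Field K] [Fintype m] [Fintype n] (s : Set (m × n)) :
    Module.finrank K (supportedOn K s) = s.ncard := by
  classical
  rw [(supportedOnEquiv s).finrank_eq, Module.finrank_fintype_fun_eq_card,
    ← Nat.card_eq_fintype_card, Nat.card_coe_set_eq]

end SupportedOn

end Matrix

section Matching

variable {n : ℕ}

theorem card_le_nuB {B : Set (Fin n × Fin n)} {B₀ : Finset (Fin n × Fin n)} (hsub : ↑B₀ ⊆ B)
    (hB₀ : IsBipMatching B₀) : #B₀ ≤ nuB B :=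
  le_csSup ⟨Fintype.card (Fin n × Fin n), by rintro _ ⟨B₁, -, -, rfl⟩; exact card_le_univ B₁⟩
    ⟨B₀, hsub, hB₀, rfl⟩

theorem nuB_le {B : Set (Fin n × Fin n)} {k : ℕ}
    (h : ∀ B₀ : Finset (Fin n × Fin n), ↑B₀ ⊆ B → IsBipMatching B₀ → #B₀ ≤ k) : nuB B ≤ k :=
  csSup_le' (by rintro _ ⟨B₀, hsub, hB₀, rfl⟩; exact h B₀ hsub hB₀)

theorem IsBipMatching.exists_fin_enum {B₀ : Finset (Fin n × Fin n)} (h : IsBipMatching B₀) :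
    ∃ p : Fin #B₀ → Fin n × Fin n,
      (∀ i, p i ∈ B₀) ∧ StrictMono (fun i => (p i).1) ∧ Injective (fun i => (p i).2) := by
  classical
  have hrow : Set.InjOn Prod.fst (B₀ : Set (Fin n × Fin n)) := fun p hp q hq hpq =>
    by_contra fun hne => (h p hp q hq hne).1 hpq
  let ρ := (B₀.image Prod.fst).orderEmbOfFin (card_image_of_injOn hrow)
  have hρ (i : Fin #B₀) : ∃ q ∈ B₀, q.1 = ρ i :=
    mem_image.mp ((B₀.image Prod.fst).orderEmbOfFin_mem (card_image_of_injOn hrow) i)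
  choose p hpB hp using hρ
  have hmono : StrictMono (fun i => (p i).1) := fun i j hij => by simpa [hp] using ρ.strictMono hij
  refine ⟨p, hpB, hmono, fun i j hij => by_contra fun hne => ?_⟩
  exact (h _ (hpB i) _ (hpB j) fun hp => hne (hmono.injective (congrArg Prod.fst hp))).2 hij

theorem rank_le_nuB {K : Type*} [Field K] {B : Set (Fin n × Fin n)}
    {A : Matrix (Fin n) (Fin n) K} (hA : A ∈ supportedOn K B) : A.rank ≤ nuB B := by
  classical
  obtain ⟨r, c, hdet⟩ := A.exists_det_submatrix_ne_zero
  obtain ⟨σ, hσ⟩ := exists_perm_forall_ne_zero_of_det_ne_zero hdet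
  have hr : Injective r := fun i j hij =>
    by_contra fun hne => hdet (det_zero_of_row_eq hne (by ext; simp [hij]))
  have hc : Injective c := fun i j hij =>
    by_contra fun hne => hdet (det_zero_of_column_eq hne (by simp [hij]))
  let q (i : Fin A.rank) : Fin n × Fin n := (r (σ i), c i)
  have hq : Injective q := fun i j h => hc (congrArg Prod.snd h)
  calc A.rank = #(univ.image q) := by rw [card_image_of_injective _ hq, card_fin]
    _ ≤ nuB B := by
      refine card_le_nuB ?_ ?_
      · simp only [coe_image, coe_univ, Set.image_univ, Set.range_subset_iff]
        exact fun i => by_contra fun hi => hσ i (hA _ _ hi)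
      · simp only [IsBipMatching, mem_image, mem_univ, true_and]
        rintro _ ⟨i, rfl⟩ _ ⟨j, rfl⟩ hij
        have hne : i ≠ j := fun h => hij (h ▸ rfl)
        exact ⟨fun h => hne (σ.injective (hr h)), fun h => hne (hc h)⟩

end Matching

section LexMinimalSupport

variable {K : Type*} [Field K] {n : ℕ}

theorem exists_ne_zero_forall_lexLt_eq_zero {R : Type*} [Zero R] {A : Matrix (Fin n) (Fin n) R}
    (hA : A ≠ 0) : ∃ p : Fin n × Fin n, A p.1 p.2 ≠ 0 ∧ ∀ q, LexLt q p → A q.1 q.2 = 0 := by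
  classical
  have hne : ({p | A p.1 p.2 ≠ 0} : Finset (Fin n × Fin n)).Nonempty := by
    contrapose! hA
    ext i j
    simpa using filter_eq_empty_iff.mp hA (mem_univ (i, j))
  obtain ⟨p, hp, hmin⟩ := exists_min_image _ toLex hne
  refine ⟨p, (mem_filter.mp hp).2, fun q hq => by_contra fun h => ?_⟩
  exact (hmin q (by simpa using h)).not_gt (Prod.Lex.toLex_lt_toLex.mpr hq)

theorem BW_subset {W : Submodule K (Matrix (Fin n) (Fin n) K)} {B : Set (Fin n × Fin n)}
    (hW : W ≤ supportedOn K B) : BW W ⊆ B :=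
  fun _ ⟨_, hAW, _, hp, _⟩ => by_contra fun hpB => hp (hW hAW _ _ hpB)

theorem finrank_le_ncard_BW (W : Submodule K (Matrix (Fin n) (Fin n) K)) :
    Module.finrank K W ≤ (BW W).ncard := by
  classical
  let φ : W →ₗ[K] (BW W → K) :=
    { toFun A p := A.1 p.1.1 p.1.2
      map_add' _ _ := rfl
      map_smul' _ _ := rfl }
  have hφ : Injective φ := by
    rw [← LinearMap.ker_eq_bot, Submodule.eq_bot_iff]
    intro A hA
    by_contra hA0
    have hA0' : (A : Matrix (Fin n) (Fin n) K) ≠ 0 := by simpa using hA0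
    obtain ⟨p, hp, hmin⟩ := exists_ne_zero_forall_lexLt_eq_zero hA0'
    exact hp (congrFun hA ⟨p, A, A.2, hA0', hp, hmin⟩)
  calc Module.finrank K W ≤ Module.finrank K (BW W → K) :=
        LinearMap.finrank_le_finrank_of_injective hφ
    _ = (BW W).ncard := by
        rw [Module.finrank_fintype_fun_eq_card, ← Nat.card_eq_fintype_card, Nat.card_coe_set_eq]

theorem exists_card_le_rank_of_subset_BW {W : Submodule K (Matrix (Fin n) (Fin n) K)}
    {B₀ : Finset (Fin n × Fin n)} (hsub : ↑B₀ ⊆ BW W) (hB₀ : IsBipMatching B₀) :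
    ∃ A ∈ W, #B₀ ≤ A.rank := by
  obtain ⟨p, hpB, hrow, hcol⟩ := hB₀.exists_fin_enum
  choose A hAW _ hAp hAmin using fun i => hsub (hpB i)
  let r i := (p i).1
  let c i := (p i).2
  have hM : ∀ t i, i < t → (A t).submatrix r c i = 0 := fun t i hit =>
    funext fun j => hAmin t ((p i).1, (p j).2) (Or.inl (hrow hit))
  have hdiag : (of fun i => (A i).submatrix r c i).det ≠ 0 := by
    rw [BlockTriangular.det_eq_prod_diag (M := of fun i => (A i).submatrix r c i)
      (fun i j hji => hAmin i ((p i).1, (p j).2) (Or.inr ⟨rfl, hji⟩)) hcol]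
    exact prod_ne_zero_iff.mpr fun i _ => hAp i
  obtain ⟨S, hS⟩ := exists_det_sum_ne_zero _ hM hdiag
  have hsum : ∑ t ∈ S, (A t).submatrix r c = (∑ t ∈ S, A t).submatrix r c := by
    ext i j
    simp [Matrix.sum_apply]
  rw [hsum] at hS
  refine ⟨∑ t ∈ S, A t, sum_mem fun t _ => hAW t, ?_⟩
  calc #B₀ = ((∑ t ∈ S, A t).submatrix r c).rank := by
        rw [rank_of_det_ne_zero hS, Fintype.card_fin]
    _ ≤ _ := rank_submatrix_le _ _ _

theorem nuB_BW_le {W : Submodule K (Matrix (Fin n) (Fin n) K)} {k : ℕ}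
    (hW : ∀ A ∈ W, A.rank ≤ k) : nuB (BW W) ≤ k :=
  nuB_le fun _ hsub hB₀ =>
    let ⟨A, hAW, hA⟩ := exists_card_le_rank_of_subset_BW hsub hB₀
    hA.trans (hW A hAW)

end LexMinimalSupport

theorem stmt6 {F : Type*} [Field F] {n : ℕ} (B : Set (Fin n × Fin n)) (k : ℕ) :
    sSup {d | ∃ W : Submodule F (Matrix (Fin n) (Fin n) F),
        (∀ A ∈ W, ∀ i j, (i, j) ∉ B → A i j = 0) ∧
        (∀ A ∈ W, A.rank ≤ k) ∧ Module.finrank F W = d}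
      = sSup {m | ∃ B' : Set (Fin n × Fin n), B' ⊆ B ∧ nuB B' ≤ k ∧ B'.ncard = m} := by
  refine csSup_eq_csSup_of_forall_exists_le ?_ ?_
  · rintro _ ⟨W, hWB, hWk, rfl⟩
    exact ⟨_, ⟨BW W, BW_subset hWB, nuB_BW_le hWk, rfl⟩, finrank_le_ncard_BW W⟩
  · rintro _ ⟨B', hB'B, hB'k, rfl⟩
    refine ⟨_, ⟨supportedOn F B', fun A hA => supportedOn_mono hB'B hA,
      fun A hA => (rank_le_nuB hA).trans hB'k, rfl⟩, (finrank_supportedOn B').ge⟩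
end

section
/- Let F be a field with char F ≠ 2, let k ≥ 2, and let U ≤ M_{k+1}(F) be a linear subspace such that B(U) = [k] × [k+1] (the set of lexicographically minimal support positions of nonzero elements of U is exactly {(i,j) : 1 ≤ i ≤ k, 1 ≤ j ≤ k+1}) and the maximal permanental rank of elements of U is k. Then U = span{e_i : i ∈ [k]} ⊗ F^{k+1}, i.e., U consists of all matrices whose last row is zero. -/
/-!
The leading positions of `U` are exactly the positions in the first `k` rows, so reduction to
echelon form shows that restriction to the first `k` rows is a linear isomorphism on `U`: `U` is
the graph of a linear map `φ` from the top rows to the last row. Since `prk A ≤ k`, every `A ∈ U`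
has vanishing permanent. Taking as top rows a vector `x` in row `a` and `t` times a partial
permutation matrix elsewhere, the permanent is `t ^ (k - 1)` times the `2 × 2` permanent of `x`
and the last row at two columns `c ≠ d`; comparing `t = 1` with `t = -1` (here `char F ≠ 2`)
gives `x c * ψ x d + x d * ψ x c = 0` for `ψ = φ ∘ Pi.single a`. With at least three columns
this forces `ψ = 0`, hence `φ = 0`.
-/

open Matrix

theorem Equiv.Perm.eq_one_or_eq_swap_of_forall_apply_eq {α : Type*} [DecidableEq α]
    {τ : Equiv.Perm α} {a b : α} (h : ∀ i, i ≠ a → i ≠ b → τ i = i) :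
    τ = 1 ∨ τ = Equiv.swap a b := by
  have ha : τ a = a ∨ τ a = b := by
    by_contra! hne
    exact hne.1 (τ.injective (h _ hne.1 hne.2))
  have hb : τ b = a ∨ τ b = b := by
    by_contra! hne
    exact hne.2 (τ.injective (h _ hne.1 hne.2))
  rcases ha with ha | ha
  · left
    ext i
    rw [Equiv.Perm.one_apply]
    by_cases hia : i = a <;> by_cases hib : i = b <;> grind [Equiv.injective]
  · right
    ext i
    grind [Equiv.injective]

theorem Equiv.Perm.exists_apply_eq_and_apply_eq {α : Type*} [DecidableEq α] {a b c d : α}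
    (hab : a ≠ b) (hcd : c ≠ d) : ∃ ρ : Equiv.Perm α, ρ a = c ∧ ρ b = d := by
  refine ⟨Equiv.swap (Equiv.swap a c b) d * Equiv.swap a c, ?_, by simp⟩
  have : c ≠ Equiv.swap a c b := by
    rw [ne_comm, Ne, Equiv.swap_apply_eq_iff, Equiv.swap_apply_right]
    exact hab.symm
  simp [Equiv.swap_apply_of_ne_of_ne this hcd]

theorem per_eq_of_forall_row_eq_single {F : Type*} [Field F] {n : ℕ}
    {M : Matrix (Fin n) (Fin n) F} {a b : Fin n} (hab : a ≠ b) (ρ : Equiv.Perm (Fin n)) (t : F)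
    (hM : ∀ i, i ≠ a → i ≠ b → M i = Pi.single (ρ i) t) :
    per M = t ^ (n - 2) * (M a (ρ a) * M b (ρ b) + M a (ρ b) * M b (ρ a)) := by
  have prod_eq : ∀ σ : Equiv.Perm (Fin n), (∀ i, i ≠ a → i ≠ b → σ i = ρ i) →
      ∏ i, M i (σ i) = t ^ (n - 2) * (M a (σ a) * M b (σ b)) := by
    intro σ hσ
    rw [← Finset.prod_mul_prod_compl {a, b}, Finset.prod_pair hab,
      Finset.prod_congr rfl (g := fun _ => t), Finset.prod_const, Finset.card_compl,
      Finset.card_pair hab, Fintype.card_fin, mul_comm]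
    intro i hi
    simp only [Finset.mem_compl, Finset.mem_insert, Finset.mem_singleton, not_or] at hi
    simp [hM i hi.1 hi.2, hσ i hi.1 hi.2]
  have vanish : ∀ σ : Equiv.Perm (Fin n), σ ≠ ρ ∧ σ ≠ ρ * Equiv.swap a b →
      ∏ i, M i (σ i) = 0 := by
    rintro σ ⟨hρ, hρswap⟩
    by_contra hne
    have hσ : ∀ i, i ≠ a → i ≠ b → σ i = ρ i := by
      intro i hia hib
      by_contra h
      exact hne (Finset.prod_eq_zero (Finset.mem_univ i) (by simp [hM i hia hib, h]))
    rcases Equiv.Perm.eq_one_or_eq_swap_of_forall_apply_eq (τ := ρ⁻¹ * σ)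
      (fun i hia hib => by simp [hσ i hia hib]) with h | h
    · exact hρ (inv_mul_eq_one.mp h).symm
    · exact hρswap (inv_mul_eq_iff_eq_mul.mp h)
  have hne : ρ ≠ ρ * Equiv.swap a b := fun h => hab (ρ.injective (by
    simpa using (congrArg (· b) h).symm))
  rw [per, Fintype.sum_eq_add _ _ hne vanish, prod_eq ρ fun _ _ _ => rfl,
    prod_eq _ fun i hia hib => by simp [Equiv.swap_apply_of_ne_of_ne hia hib]]
  simp only [Equiv.Perm.mul_apply, Equiv.swap_apply_left, Equiv.swap_apply_right]
  ring

theorem per_eq_zero_of_prk_lt {F : Type*} [Field F] {n : ℕ} {A : Matrix (Fin n) (Fin n) F}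
    (h : prk A < n) : per A = 0 := by
  by_contra hA
  have hbdd : BddAbove {m | ∃ I J : Fin m → Fin n, StrictMono I ∧ StrictMono J ∧
      per (A.submatrix I J) ≠ 0} :=
    ⟨n, fun m ⟨I, _, hI, _⟩ => by simpa using Fintype.card_le_of_injective I hI.injective⟩
  exact h.not_ge (le_csSup hbdd ⟨id, id, strictMono_id, strictMono_id, by simpa using hA⟩)

theorem lexLt_iff_toLex_lt {n : ℕ} {p q : Fin n × Fin n} : LexLt p q ↔ toLex p < toLex q :=
  Prod.Lex.toLex_lt_toLex.symm

theorem exists_leading_pos_of_ne_zero {α : Type*} [Zero α] {n : ℕ}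
    {A : Matrix (Fin n) (Fin n) α} (hA : A ≠ 0) :
    ∃ p : Fin n × Fin n, A p.1 p.2 ≠ 0 ∧ ∀ q, LexLt q p → A q.1 q.2 = 0 := by
  classical
  have hsupp : (Finset.univ.filter fun p : Fin n × Fin n => A p.1 p.2 ≠ 0).Nonempty := by
    by_contra h
    refine hA (Matrix.ext fun i j => ?_)
    by_contra hij
    exact h ⟨(i, j), by simpa using hij⟩
  obtain ⟨p, hp, hmin⟩ := Finset.exists_min_image _ toLex hsupp
  refine ⟨p, (Finset.mem_filter.mp hp).2, fun q hqp => ?_⟩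
  by_contra hq
  exact (lexLt_iff_toLex_lt.mp hqp).not_ge (hmin q (by simpa using hq))

section Echelon

variable {F : Type*} [Field F] {n : ℕ} {W : Submodule F (Matrix (Fin n) (Fin n) F)}

theorem eq_zero_of_forall_mem_BW {A : Matrix (Fin n) (Fin n) F} (hA : A ∈ W)
    (h : ∀ p ∈ BW W, A p.1 p.2 = 0) : A = 0 := by
  by_contra hA0
  obtain ⟨p, hp, hmin⟩ := exists_leading_pos_of_ne_zero hA0
  exact hp (h p ⟨A, hA, hA0, hp, hmin⟩)

theorem exists_mem_eqOn_BW (T : Matrix (Fin n) (Fin n) F) :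
    ∃ A ∈ W, ∀ p ∈ BW W, A p.1 p.2 = T p.1 p.2 := by
  classical
  suffices h : ∀ s : Finset (Lex (Fin n × Fin n)), (∀ p ∈ s, ofLex p ∈ BW W) →
      ∃ A ∈ W, ∀ p ∈ s, A (ofLex p).1 (ofLex p).2 = T (ofLex p).1 (ofLex p).2 by
    obtain ⟨A, hA, hAT⟩ := h (Finset.univ.filter fun p => ofLex p ∈ BW W) (by simp)
    exact ⟨A, hA, fun p hp => hAT (toLex p) (by simpa using hp)⟩
  intro s
  induction s using Finset.induction_on_max with
  | empty => exact fun _ => ⟨0, W.zero_mem, by simp⟩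
  | insert a s hlt ih =>
    intro hs
    obtain ⟨A, hA, hAT⟩ := ih fun p hp => hs p (Finset.mem_insert_of_mem hp)
    obtain ⟨B, hB, -, hBa, hBmin⟩ := hs a (Finset.mem_insert_self a s)
    -- adding a multiple of `B` fixes the entry at `a` without touching the earlier ones
    set c := (T (ofLex a).1 (ofLex a).2 - A (ofLex a).1 (ofLex a).2) / B (ofLex a).1 (ofLex a).2
    refine ⟨A + c • B, W.add_mem hA (W.smul_mem c hB), fun p hp => ?_⟩
    rcases Finset.mem_insert.mp hp with rfl | hp
    · simp only [Matrix.add_apply, Matrix.smul_apply, smul_eq_mul, c]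
      field_simp
      ring
    · simp [hAT p hp, hBmin (ofLex p) (lexLt_iff_toLex_lt.mpr (hlt p hp))]

end Echelon

theorem LinearMap.eq_zero_of_forall_mul_apply_add_mul_apply_eq_zero {F ι : Type*} [Field F]
    [Fintype ι] [DecidableEq ι] (hι : 2 < Fintype.card ι) (h2 : (2 : F) ≠ 0)
    {ψ : (ι → F) →ₗ[F] ι → F} (h : ∀ x c d, c ≠ d → x c * ψ x d + x d * ψ x c = 0) :
    ψ = 0 := by
  have off_diag : ∀ b l, b ≠ l → ψ (Pi.single b 1) l = 0 := fun b l hbl => by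
    simpa [hbl.symm] using h (Pi.single b 1) b l hbl
  have diag_add : ∀ b m, b ≠ m → ψ (Pi.single b 1) b + ψ (Pi.single m 1) m = 0 :=
    fun b m hbm => by
      have := h (Pi.single b 1 + Pi.single m 1) b m hbm
      simp only [Pi.add_apply, map_add, Pi.single_eq_same, Pi.single_eq_of_ne hbm,
        Pi.single_eq_of_ne hbm.symm, off_diag b m hbm, off_diag m b hbm.symm] at this
      linear_combination this
  have diag : ∀ b, ψ (Pi.single b 1) b = 0 := fun b => by
    obtain ⟨m, hm, l, hl, hml⟩ := Finset.one_lt_card.mp (show 1 < (Finset.univ.erase b).card by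
      rw [Finset.card_erase_of_mem (Finset.mem_univ b), Finset.card_univ]; omega)
    have hbm := (Finset.ne_of_mem_erase hm).symm
    have hbl := (Finset.ne_of_mem_erase hl).symm
    have : 2 * ψ (Pi.single b 1) b = 0 := by
      linear_combination diag_add b m hbm + diag_add b l hbl - diag_add m l hml
    exact (mul_eq_zero.mp this).resolve_left h2
  refine LinearMap.pi_ext fun b x => funext fun l => ?_
  rw [← mul_one x, ← smul_eq_mul, Pi.single_smul, map_smul]
  rcases eq_or_ne b l with rfl | hbl
  · simp [diag]
  · simp [off_diag b l hbl]

section LastRow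

variable {F : Type*} [Field F] {k : ℕ}

def topRows : Matrix (Fin (k + 1)) (Fin (k + 1)) F →ₗ[F] Fin k → Fin (k + 1) → F where
  toFun A i := A i.castSucc
  map_add' _ _ := rfl
  map_smul' _ _ := rfl

variable {U : Submodule F (Matrix (Fin (k + 1)) (Fin (k + 1)) F)}

theorem bijective_topRows_domRestrict (hB : BW U = {p | (p.1 : ℕ) < k}) :
    Function.Bijective (topRows.domRestrict U) := by
  refine ⟨(injective_iff_map_eq_zero _).mpr fun A hA => ?_, fun R => ?_⟩
  · refine Subtype.ext (eq_zero_of_forall_mem_BW A.2 fun p hp => ?_)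
    rw [hB] at hp
    rw [← Fin.castSucc_castLT p.1 hp]
    exact congrFun (congrFun hA _) p.2
  · obtain ⟨A, hA, hAR⟩ := exists_mem_eqOn_BW (W := U) (Matrix.of (Fin.snoc R 0))
    refine ⟨⟨A, hA⟩, funext fun i => funext fun j => ?_⟩
    show A i.castSucc j = R i j
    simpa using hAR (i.castSucc, j) (by simp [hB])

noncomputable def topRowsEquiv (hB : BW U = {p | (p.1 : ℕ) < k}) :
    U ≃ₗ[F] Fin k → Fin (k + 1) → F :=
  LinearEquiv.ofBijective _ (bijective_topRows_domRestrict hB)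

noncomputable def lastRowOfTopRows (hB : BW U = {p | (p.1 : ℕ) < k}) :
    (Fin k → Fin (k + 1) → F) →ₗ[F] Fin (k + 1) → F :=
  LinearMap.proj (Fin.last k) ∘ₗ U.subtype ∘ₗ (topRowsEquiv hB).symm.toLinearMap

theorem topRows_topRowsEquiv_symm (hB : BW U = {p | (p.1 : ℕ) < k})
    (R : Fin k → Fin (k + 1) → F) : topRows ((topRowsEquiv hB).symm R : Matrix _ _ F) = R :=
  (topRowsEquiv hB).apply_symm_apply R

theorem mem_iff_last_eq_lastRowOfTopRows (hB : BW U = {p | (p.1 : ℕ) < k})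
    {A : Matrix (Fin (k + 1)) (Fin (k + 1)) F} :
    A ∈ U ↔ A (Fin.last k) = lastRowOfTopRows hB (topRows A) := by
  constructor
  · intro hA
    have : (topRowsEquiv hB).symm (topRows A) = ⟨A, hA⟩ :=
      (topRowsEquiv hB).symm_apply_eq.mpr rfl
    change A (Fin.last k) = ((topRowsEquiv hB).symm (topRows A) : Matrix _ _ F) (Fin.last k)
    rw [this]
  · intro hA
    convert ((topRowsEquiv hB).symm (topRows A)).2
    ext i j
    rcases Fin.eq_castSucc_or_eq_last i with ⟨i, rfl⟩ | rfl
    · exact (congrFun (congrFun (topRows_topRowsEquiv_symm hB (topRows A)) i) j).symm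
    · rw [hA]
      rfl

theorem mul_lastRowOfTopRows_single_add_mul_eq_zero (hB : BW U = {p | (p.1 : ℕ) < k})
    (hper : ∀ A ∈ U, per A = 0) (h2 : (2 : F) ≠ 0) (a : Fin k) (x : Fin (k + 1) → F)
    {c d : Fin (k + 1)} (hcd : c ≠ d) :
    x c * lastRowOfTopRows hB (Pi.single a x) d + x d * lastRowOfTopRows hB (Pi.single a x) c
      = 0 := by
  set φ := lastRowOfTopRows hB
  have ha : a.castSucc ≠ Fin.last k := (Fin.castSucc_lt_last a).ne
  obtain ⟨ρ, hρa, hρl⟩ := Equiv.Perm.exists_apply_eq_and_apply_eq ha hcd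
  let D : Fin k → Fin (k + 1) → F := fun i => if i = a then 0 else Pi.single (ρ i.castSucc) 1
  have key : ∀ t : F, t ^ (k + 1 - 2) * (x c * (φ (Pi.single a x) d + t * φ D d)
      + x d * (φ (Pi.single a x) c + t * φ D c)) = 0 := fun t => by
    set M := (topRowsEquiv hB).symm (Pi.single a x + t • D)
    have hrows : ∀ i, (M : Matrix _ _ F) i.castSucc = Pi.single a x i + t • D i :=
      congrFun (topRows_topRowsEquiv_symm hB _)
    have hlast : (M : Matrix _ _ F) (Fin.last k) = φ (Pi.single a x) + t • φ D := by
      rw [(mem_iff_last_eq_lastRowOfTopRows hB).mp M.2, topRows_topRowsEquiv_symm, map_add,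
        map_smul]
    have hMa : (M : Matrix _ _ F) a.castSucc = x := by
      simp [hrows, D]
    have hM : ∀ i, i ≠ a.castSucc → i ≠ Fin.last k →
        (M : Matrix _ _ F) i = Pi.single (ρ i) t := by
      intro i hia hil
      obtain ⟨j, rfl⟩ := Fin.exists_castSucc_eq.mpr hil
      have hja : j ≠ a := fun h => hia (h ▸ rfl)
      simp [hrows, D, hja, ← Pi.single_smul]
    have := per_eq_of_forall_row_eq_single ha ρ t hM
    rw [hper M M.2, hMa, hlast, hρa, hρl] at this
    simpa using this.symm
  have hplus := key 1
  have hminus := key (-1)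
  rw [one_pow, one_mul] at hplus
  rw [mul_eq_zero, or_iff_right (pow_ne_zero _ (neg_ne_zero.mpr one_ne_zero))] at hminus
  have : 2 * (x c * φ (Pi.single a x) d + x d * φ (Pi.single a x) c) = 0 := by
    linear_combination hplus + hminus
  exact (mul_eq_zero.mp this).resolve_left h2

theorem lastRowOfTopRows_eq_zero (hB : BW U = {p | (p.1 : ℕ) < k})
    (hper : ∀ A ∈ U, per A = 0) (h2 : (2 : F) ≠ 0) (hk : 2 ≤ k) : lastRowOfTopRows hB = 0 :=
  LinearMap.pi_ext' fun a => by
    rw [LinearMap.zero_comp]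
    exact LinearMap.eq_zero_of_forall_mul_apply_add_mul_apply_eq_zero (by simp; omega) h2
      fun x c d hcd => mul_lastRowOfTopRows_single_add_mul_eq_zero hB hper h2 a x hcd

end LastRow

theorem stmt7_general {F : Type*} [Field F] (hc : ringChar F ≠ 2) {k : ℕ} (hk : 2 ≤ k)
    (U : Submodule F (Matrix (Fin (k + 1)) (Fin (k + 1)) F))
    (hB : BW U = {p : Fin (k + 1) × Fin (k + 1) | (p.1 : ℕ) < k})
    (hub : ∀ A ∈ U, prk A ≤ k) :
    (U : Set (Matrix (Fin (k + 1)) (Fin (k + 1)) F))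
      = {A | ∀ j, A (Fin.last k) j = 0} := by
  have hper : ∀ A ∈ U, per A = 0 := fun A hA =>
    per_eq_zero_of_prk_lt ((hub A hA).trans_lt k.lt_succ_self)
  have hφ := lastRowOfTopRows_eq_zero hB hper (Ring.two_ne_zero hc) hk
  ext A
  rw [SetLike.mem_coe, mem_iff_last_eq_lastRowOfTopRows hB, hφ, LinearMap.zero_apply, funext_iff]
  rfl

theorem stmt7 {F : Type*} [Field F] (hc : ringChar F ≠ 2) {k : ℕ} (hk : 2 ≤ k)
    (U : Submodule F (Matrix (Fin (k + 1)) (Fin (k + 1)) F))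
    (hB : BW U = {p : Fin (k + 1) × Fin (k + 1) | (p.1 : ℕ) < k})
    (hub : ∀ A ∈ U, prk A ≤ k) (hex : ∃ A ∈ U, prk A = k) :
    (U : Set (Matrix (Fin (k + 1)) (Fin (k + 1)) F))
      = {A | ∀ j, A (Fin.last k) j = 0} :=
  stmt7_general hc hk U hB hub
end

section
/- Let F be a field and G ⊆ {{i,j} : 1 ≤ i < j ≤ n} a graph on [n]. The maximal rank of a matrix in the space A_G(F) of alternating matrices supported on G equals 2ν(G), twice the matching number of G. -/
open Matrix

/-!
Lower bound: put `±1` at the two entries of each edge of a maximum matching; the columns of this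
matrix contain, up to sign, the unit vectors at all `2ν(G)` matched vertices.

Upper bound: an alternating matrix of rank `r` has a nonsingular principal `r × r` submatrix `B`.
In `det B = ∑ σ, sign σ * ∏ i, B i (σ i)`, reversing a canonically chosen odd cycle of `σ` keeps
the sign and, by skew-symmetry, negates the product. This involution has no fixed points, so these
terms cancel in pairs, in every characteristic. Hence some nonzero term comes from a
fixed-point-free `σ` with only even cycles, and every other edge of its cycles gives a matching of
size `r / 2` in the support of the matrix.
-/

open Finset Equiv

namespace Equiv.Perm

variable {α : Type*} [Fintype α] [DecidableEq α]

theorem commute_cycleOf (σ : Perm α) (x : α) : Commute σ (σ.cycleOf x) := by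
  ext y
  by_cases hy : σ.SameCycle x y <;> simp [cycleOf_apply, hy]

-- On the cycle `c` through `x` this acts as `c⁻¹`, elsewhere as `σ`.
def reverseCycle (σ : Perm α) (x : α) : Perm α :=
  (σ.cycleOf x)⁻¹ * (σ.cycleOf x)⁻¹ * σ

variable {σ : Perm α} {x y : α}

theorem inv_cycleOf_apply_of_not_sameCycle (h : ¬σ.SameCycle x y) : (σ.cycleOf x)⁻¹ y = y :=
  inv_eq_iff_eq.2 (cycleOf_apply_of_not_sameCycle h).symm

theorem reverseCycle_apply_of_sameCycle (h : σ.SameCycle x y) :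
    σ.reverseCycle x y = (σ.cycleOf x)⁻¹ y := by
  rw [reverseCycle, mul_apply, mul_apply, ← h.cycleOf_apply, inv_eq_iff_eq.2 rfl]

theorem reverseCycle_apply_of_not_sameCycle (h : ¬σ.SameCycle x y) :
    σ.reverseCycle x y = σ y := by
  have h' : ¬σ.SameCycle x (σ y) := by rwa [sameCycle_apply_right]
  rw [reverseCycle, mul_apply, mul_apply, inv_cycleOf_apply_of_not_sameCycle h',
    inv_cycleOf_apply_of_not_sameCycle h']

theorem cycleOf_reverseCycle_of_sameCycle (hx : σ x ≠ x) (h : σ.SameCycle x y) :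
    (σ.reverseCycle x).cycleOf y = (σ.cycleOf x)⁻¹ := by
  have hc := (σ.commute_cycleOf x).inv_right
  have hfix : ((σ.cycleOf x)⁻¹ * σ) y = y := by
    rw [mul_apply, ← h.cycleOf_apply, inv_eq_iff_eq.2 rfl]
  have hy : (σ.cycleOf x)⁻¹ y ≠ y := by
    rw [Ne, inv_eq_iff_eq, h.cycleOf_apply, eq_comm, ← h.apply_eq_self_iff]
    exact hx
  rw [reverseCycle, mul_assoc, cycleOf_mul_of_apply_right_eq_self
    ((Commute.refl _).mul_right hc.symm) y hfix, (isCycle_cycleOf σ hx).inv.cycleOf_eq hy]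

theorem cycleOf_reverseCycle_of_not_sameCycle (h : ¬σ.SameCycle x y) :
    (σ.reverseCycle x).cycleOf y = σ.cycleOf y := by
  have hc := (σ.commute_cycleOf x).inv_right
  have hfix : ((σ.cycleOf x)⁻¹ * (σ.cycleOf x)⁻¹) y = y := by
    rw [mul_apply, inv_cycleOf_apply_of_not_sameCycle h, inv_cycleOf_apply_of_not_sameCycle h]
  rw [reverseCycle, ← (hc.mul_right hc).eq,
    cycleOf_mul_of_apply_right_eq_self (hc.mul_right hc) y hfix]

theorem card_support_cycleOf_reverseCycle (hx : σ x ≠ x) (y : α) :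
    #((σ.reverseCycle x).cycleOf y).support = #(σ.cycleOf y).support := by
  by_cases h : σ.SameCycle x y
  · rw [cycleOf_reverseCycle_of_sameCycle hx h, support_inv, h.cycleOf_eq]
  · rw [cycleOf_reverseCycle_of_not_sameCycle h]

theorem reverseCycle_reverseCycle (hx : σ x ≠ x) : (σ.reverseCycle x).reverseCycle x = σ := by
  rw [reverseCycle, cycleOf_reverseCycle_of_sameCycle hx (SameCycle.refl σ x), reverseCycle]
  group

theorem sign_reverseCycle (σ : Perm α) (x : α) : sign (σ.reverseCycle x) = sign σ := by
  simp [reverseCycle, Int.units_mul_self]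

theorem apply_ne_self_of_odd_card_support_cycleOf (hodd : Odd #(σ.cycleOf x).support) :
    σ x ≠ x := by
  intro hx
  rw [(cycleOf_eq_one_iff σ).2 hx, support_one] at hodd
  simp at hodd

theorem reverseCycle_ne_self (hodd : Odd #(σ.cycleOf x).support) : σ.reverseCycle x ≠ σ := by
  intro h
  have hx := apply_ne_self_of_odd_card_support_cycleOf hodd
  have hsq : σ.cycleOf x ^ 2 = 1 := by
    rw [reverseCycle, mul_eq_right, ← _root_.mul_inv_rev, inv_eq_one] at h
    rwa [sq]
  have hdvd := (isCycle_cycleOf σ hx).orderOf ▸ orderOf_dvd_of_pow_eq_one hsq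
  have h2 : #(σ.cycleOf x).support ≤ 2 := Nat.le_of_dvd two_pos hdvd
  have h1 := card_support_ne_one (σ.cycleOf x)
  obtain ⟨k, hk⟩ := hodd
  omega

-- Fixed points have empty cycle support, so they do not count as odd cycles.
def HasOddCycle (σ : Perm α) : Prop := ∃ x, Odd #(σ.cycleOf x).support

instance : DecidablePred (HasOddCycle (α := α)) := fun σ =>
  inferInstanceAs (Decidable (∃ x, Odd #(σ.cycleOf x).support))

noncomputable def reverseOddCycle (σ : Perm α) : Perm α :=
  if h : σ.HasOddCycle then σ.reverseCycle h.choose else σ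

theorem reverseOddCycle_of_hasOddCycle (h : σ.HasOddCycle) :
    σ.reverseOddCycle = σ.reverseCycle h.choose :=
  dif_pos h

theorem reverseOddCycle_of_not_hasOddCycle (h : ¬σ.HasOddCycle) : σ.reverseOddCycle = σ :=
  dif_neg h

theorem hasOddCycle_reverseCycle (hodd : Odd #(σ.cycleOf x).support) :
    (σ.reverseCycle x).HasOddCycle ↔ σ.HasOddCycle := by
  simp only [HasOddCycle, card_support_cycleOf_reverseCycle
    (apply_ne_self_of_odd_card_support_cycleOf hodd)]

theorem reverseOddCycle_reverseOddCycle (σ : Perm α) : σ.reverseOddCycle.reverseOddCycle = σ := by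
  by_cases h : σ.HasOddCycle
  · have hx := apply_ne_self_of_odd_card_support_cycleOf h.choose_spec
    have h' := (hasOddCycle_reverseCycle h.choose_spec).2 h
    have choose_congr : ∀ {P Q : α → Prop} (hP : ∃ y, P y) (hQ : ∃ y, Q y), P = Q →
        hP.choose = hQ.choose := by
      rintro P Q hP hQ rfl; rfl
    -- The chosen point depends only on which points lie on odd cycles, and reversal keeps all
    -- cycle lengths.
    have hchoose : h'.choose = h.choose :=
      choose_congr h' h (funext fun y => by rw [card_support_cycleOf_reverseCycle hx])
    rw [reverseOddCycle_of_hasOddCycle h, reverseOddCycle_of_hasOddCycle h', hchoose,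
      reverseCycle_reverseCycle hx]
  · rw [reverseOddCycle_of_not_hasOddCycle h, reverseOddCycle_of_not_hasOddCycle h]

theorem exists_zmod_two_coloring (hfix : ∀ x, σ x ≠ x) (heven : ¬σ.HasOddCycle) :
    ∃ χ : α → ZMod 2, ∀ x, χ (σ x) = χ x + 1 := by
  -- Colour `x` by the parity of some `k` with `(σ ^ k) (base x) = x`, where `base` picks a point
  -- of each cycle; the parity is well defined because every cycle has even length.
  let base : α → α := fun x => (Quotient.mk (SameCycle.setoid σ) x).out
  have hbase : ∀ x, σ.SameCycle (base x) x := Quotient.mk_out (s := SameCycle.setoid σ)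
  choose k hk using hbase
  refine ⟨fun x => k x, fun x => ?_⟩
  have hb : base (σ x) = base x :=
    congrArg Quotient.out (Quotient.sound (s := SameCycle.setoid σ)
      (sameCycle_apply_right.2 (SameCycle.refl σ x)).symm)
  have hmem : base x ∈ (σ.cycleOf x).support :=
    mem_support_cycleOf_iff.2 ⟨SameCycle.symm ⟨k x, hk x⟩, mem_support.2 (hfix x)⟩
  have hmod : k (σ x) ≡ k x + 1 [ZMOD #(σ.cycleOf x).support] := by
    rw [← (isCycleOn_support_cycleOf σ x).zpow_apply_eq_zpow_apply hmem, ← hb, hk (σ x), hb,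
      add_comm, _root_.zpow_add, zpow_one, mul_apply, hk]
  have h2 : (2 : ℤ) ∣ #(σ.cycleOf x).support := by
    exact_mod_cast (Nat.not_odd_iff_even.1 (fun h => heven ⟨x, h⟩)).two_dvd
  have := (ZMod.intCast_eq_intCast_iff _ _ 2).2 (hmod.of_dvd h2)
  push_cast at this
  exact this

end Equiv.Perm

namespace Matrix

section Determinant

variable {α R : Type*} [Fintype α] [DecidableEq α] [CommRing R]

theorem prod_inv_apply_of_transpose_eq_neg {B : Matrix α α R} (hB : Bᵀ = -B) (c : Perm α) :
    ∏ i ∈ c.support, B i (c⁻¹ i) = (-1) ^ #c.support * ∏ i ∈ c.support, B i (c i) := by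
  have hskew : ∀ i j, B i j = -B j i := fun i j => by
    simpa using (congrFun (congrFun hB j) i)
  have hsupp : {a | c⁻¹ a ≠ a} ⊆ c.support := fun a ha => by
    rw [← Perm.support_inv]; exact Perm.mem_support.2 ha
  simp_rw [hskew _ (c⁻¹ _)]
  rw [prod_neg, (c⁻¹).prod_comp' c.support (fun j i => B j i) hsupp]
  rfl

theorem prod_reverseCycle_of_transpose_eq_neg {B : Matrix α α R} (hB : Bᵀ = -B) {σ : Perm α}
    {x : α} (hodd : Odd #(σ.cycleOf x).support) :
    ∏ i, B i (σ.reverseCycle x i) = -∏ i, B i (σ i) := by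
  have hsame : ∀ i, i ∈ (σ.cycleOf x).support ↔ σ.SameCycle x i := fun i =>
    Perm.mem_support_cycleOf_iff' (Perm.apply_ne_self_of_odd_card_support_cycleOf hodd)
  set c := σ.cycleOf x
  rw [← prod_mul_prod_compl c.support, ← prod_mul_prod_compl c.support (fun i => B i (σ i))]
  have hin : ∏ i ∈ c.support, B i (σ.reverseCycle x i) = -∏ i ∈ c.support, B i (σ i) := by
    rw [prod_congr rfl fun i hi => by rw [Perm.reverseCycle_apply_of_sameCycle ((hsame i).1 hi)],
      prod_inv_apply_of_transpose_eq_neg hB, hodd.neg_one_pow, neg_one_mul,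
      prod_congr rfl fun i hi => by rw [((hsame i).1 hi).cycleOf_apply]]
  have hout : ∏ i ∈ c.supportᶜ, B i (σ.reverseCycle x i) = ∏ i ∈ c.supportᶜ, B i (σ i) :=
    prod_congr rfl fun i hi => by
      rw [Perm.reverseCycle_apply_of_not_sameCycle fun h => mem_compl.1 hi ((hsame i).2 h)]
  rw [hin, hout, neg_mul]

theorem sum_hasOddCycle_eq_zero {B : Matrix α α R} (hB : Bᵀ = -B) :
    ∑ σ ∈ univ.filter Perm.HasOddCycle, Perm.sign σ • ∏ i, B i (σ i) = 0 := by
  refine sum_involution (fun σ _ => σ.reverseOddCycle) (fun σ hσ => ?_) (fun σ hσ _ => ?_)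
    (fun σ hσ => ?_) (fun σ _ => σ.reverseOddCycle_reverseOddCycle)
  all_goals
    obtain ⟨-, hodd⟩ := mem_filter.1 hσ
    rw [Perm.reverseOddCycle_of_hasOddCycle hodd]
  · rw [Perm.sign_reverseCycle, prod_reverseCycle_of_transpose_eq_neg hB hodd.choose_spec,
      smul_neg, add_neg_cancel]
  · exact Perm.reverseCycle_ne_self hodd.choose_spec
  · exact mem_filter.2 ⟨mem_univ _, (Perm.hasOddCycle_reverseCycle hodd.choose_spec).2 hodd⟩

theorem exists_perm_not_hasOddCycle_of_det_ne_zero {B : Matrix α α R} (hB : Bᵀ = -B)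
    (hdet : B.det ≠ 0) : ∃ σ : Perm α, ¬σ.HasOddCycle ∧ ∏ i, B i (σ i) ≠ 0 := by
  rw [← det_transpose, det_apply, ← sum_filter_add_sum_filter_not _ Perm.HasOddCycle] at hdet
  simp only [transpose_apply] at hdet
  rw [sum_hasOddCycle_eq_zero hB, zero_add] at hdet
  obtain ⟨σ, hσ, hne⟩ := exists_ne_zero_of_sum_ne_zero hdet
  exact ⟨σ, (mem_filter.1 hσ).2, fun h => hne (by rw [h, smul_zero])⟩

end Determinant

section Rank

variable {ι F : Type*} [Fintype ι] [DecidableEq ι] [Field F]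

theorem det_ne_zero_of_rank_eq_card {B : Matrix ι ι F} (h : B.rank = Fintype.card ι) :
    B.det ≠ 0 := by
  rw [← isUnit_iff_ne_zero, ← isUnit_iff_isUnit_det, ← linearIndependent_rows_iff_isUnit,
    linearIndependent_iff_card_eq_finrank_span, Set.finrank, ← rank_eq_finrank_span_row, h]

theorem exists_card_eq_rank_det_submatrix_ne_zero {A : Matrix ι ι F} (hA : Aᵀ = -A) :
    ∃ S : Finset ι, #S = A.rank ∧ (A.submatrix ((↑) : S → ι) (↑)).det ≠ 0 := by
  -- Take rows `R` indexed by `S` forming a basis of the row space. Then `A = C * R`, and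
  -- skew-symmetry turns this into `A = C * B * Cᵀ` with `B` the principal submatrix on `S`.
  obtain ⟨S, -, -, hspan, hli⟩ :=
    exists_linearIndepOn_extension (linearIndepOn_empty F A.row) (Set.empty_subset Set.univ)
  lift S to Finset ι using S.toFinite
  set R : Matrix S ι F := A.submatrix (↑) id
  set B : Matrix S S F := A.submatrix (↑) (↑)
  have hrows : ∀ j, A j ∈ Submodule.span F (Set.range R.row) := fun j => by
    have := hspan ⟨j, trivial, rfl⟩
    rwa [Set.image_eq_range] at this
  choose C hC using fun j => (Submodule.mem_span_range_iff_exists_fun F).1 (hrows j)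
  have hfac : A = of C * R := by
    ext j k
    simp [mul_apply, ← hC j, Finset.sum_apply, R]
  have hcols : A.submatrix id ((↑) : S → ι) = of C * B := by
    conv_lhs => rw [hfac]
    rfl
  have hR : R = B * (of C)ᵀ := by
    have hB : Bᵀ = -B := by rw [transpose_submatrix, hA]; rfl
    calc R = -(A.submatrix id ((↑) : S → ι))ᵀ := by
          rw [transpose_submatrix, hA]; exact (neg_neg R).symm
      _ = B * (of C)ᵀ := by rw [hcols, transpose_mul, hB, Matrix.neg_mul, neg_neg]
  have hle : A.rank ≤ B.rank := by
    rw [hfac, hR]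
    exact (rank_mul_le_right _ _).trans (rank_mul_le_left _ _)
  have hcard : #S ≤ A.rank := by
    simpa using (LinearIndependent.rank_matrix (M := R) hli).symm.trans_le (rank_submatrix_le A _ _)
  have hB : B.rank = Fintype.card S :=
    le_antisymm (rank_le_card_width _) (by simpa using hcard.trans hle)
  refine ⟨S, le_antisymm hcard (hle.trans_eq (by simpa using hB)), det_ne_zero_of_rank_eq_card hB⟩

end Rank

end Matrix

section Matching

variable {n : ℕ}

theorem exists_isGraphMatching_of_coloring {κ : Type*} [Fintype κ] [DecidableEq κ]
    {f : κ → Fin n} (hf : Function.Injective f) (σ : Perm κ) {χ : κ → ZMod 2}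
    (hχ : ∀ x, χ (σ x) = χ x + 1) :
    ∃ M : Finset (Sym2 (Fin n)), (∀ e ∈ M, ∃ x, e = s(f x, f (σ x))) ∧ IsGraphMatching M ∧
      2 * #M = Fintype.card κ := by
  have hflip : ∀ x, χ (σ x) ≠ 0 ↔ χ x = 0 := fun x => by
    rw [hχ]; generalize χ x = a; revert a; decide
  set Z := univ.filter (χ · = 0)
  have hunique : ∀ x ∈ Z, ∀ y ∈ Z, ∀ v, v ∈ s(f x, f (σ x)) → v ∈ s(f y, f (σ y)) → x = y := by
    intro x hx y hy v hvx hvy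
    simp only [Z, mem_filter, mem_univ, true_and] at hx hy
    rcases Sym2.mem_iff.1 hvx with rfl | rfl <;> rcases Sym2.mem_iff.1 hvy with h | h <;>
      have h := hf h
    · exact h
    · exact absurd (by rwa [← h]) ((hflip y).2 hy)
    · exact absurd (by rwa [h]) ((hflip x).2 hx)
    · exact σ.injective h
  refine ⟨Z.image fun x => s(f x, f (σ x)), ?_, ?_, ?_⟩
  · intro e he
    obtain ⟨x, -, rfl⟩ := mem_image.1 he
    exact ⟨x, rfl⟩
  · intro e he e' he' hne v hv hv'
    obtain ⟨x, hx, rfl⟩ := mem_image.1 he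
    obtain ⟨y, hy, rfl⟩ := mem_image.1 he'
    exact hne (by rw [hunique x hx y hy v hv hv'])
  · have hinj : Set.InjOn (fun x => s(f x, f (σ x))) Z := fun x hx y hy hxy =>
      hunique x hx y hy (f x) (Sym2.mem_mk_left _ _)
        (by dsimp only at hxy; rw [← hxy]; exact Sym2.mem_mk_left _ _)
    rw [card_image_of_injOn hinj]
    have hcompl : #(univ.filter fun x => ¬χ x = 0) = #Z := by
      refine card_nbij' (σ⁻¹ ·) (σ ·) (fun x hx => ?_) (fun x hx => ?_) (fun x _ => ?_)
        (fun x _ => ?_)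
      · simp only [Z, coe_filter, mem_univ, true_and, Set.mem_ofPred_eq] at hx ⊢
        rwa [← hflip, ← Perm.mul_apply, mul_inv_cancel, Perm.one_apply]
      · simp only [Z, coe_filter, mem_univ, true_and, Set.mem_ofPred_eq] at hx ⊢
        exact (hflip x).2 hx
      all_goals simp
    rw [← card_univ, ← card_filter_add_card_filter_not (s := univ) (χ · = 0), hcompl]
    ring

theorem bddAbove_card_isGraphMatching (G : Set (Sym2 (Fin n))) :
    BddAbove {m | ∃ M : Finset (Sym2 (Fin n)), ↑M ⊆ G ∧ IsGraphMatching M ∧ M.card = m} :=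
  ⟨Fintype.card (Sym2 (Fin n)), by rintro m ⟨M, -, -, rfl⟩; exact card_le_univ M⟩

theorem card_le_nuG {G : Set (Sym2 (Fin n))} {M : Finset (Sym2 (Fin n))} (hMG : ↑M ⊆ G)
    (hM : IsGraphMatching M) : #M ≤ nuG G :=
  le_csSup (bddAbove_card_isGraphMatching G) ⟨M, hMG, hM, rfl⟩

theorem exists_isGraphMatching_card_eq_nuG (G : Set (Sym2 (Fin n))) :
    ∃ M : Finset (Sym2 (Fin n)), ↑M ⊆ G ∧ IsGraphMatching M ∧ #M = nuG G := by
  have hempty : IsGraphMatching (∅ : Finset (Sym2 (Fin n))) := by simp [IsGraphMatching]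
  refine Nat.sSup_mem ?_ (bddAbove_card_isGraphMatching G)
  exact ⟨0, ∅, by simp, hempty, rfl⟩

theorem IsGraphMatching.eq_of_mem {M : Finset (Sym2 (Fin n))} (hM : IsGraphMatching M)
    {e f : Sym2 (Fin n)} (he : e ∈ M) (hf : f ∈ M) {v : Fin n} (hve : v ∈ e) (hvf : v ∈ f) :
    e = f :=
  by_contra fun hne => hM e he f hf hne v hve hvf

variable {F : Type*} [Field F]

def matchingMatrix (M : Finset (Sym2 (Fin n))) : Matrix (Fin n) (Fin n) F :=
  Matrix.of fun i j => if s(i, j) ∈ M then (if i < j then 1 else -1) else 0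

theorem matchingMatrix_apply_ne_zero {M : Finset (Sym2 (Fin n))} {i j : Fin n}
    (h : s(i, j) ∈ M) : matchingMatrix (F := F) M i j ≠ 0 := by
  simp only [matchingMatrix, Matrix.of_apply, if_pos h]
  split_ifs <;> simp

theorem mem_of_matchingMatrix_apply_ne_zero {M : Finset (Sym2 (Fin n))} {i j : Fin n}
    (h : matchingMatrix (F := F) M i j ≠ 0) : s(i, j) ∈ M := by
  by_contra hij
  simp [matchingMatrix, hij] at h

theorem isAlt_matchingMatrix {M : Finset (Sym2 (Fin n))} (hdiag : ∀ e ∈ M, ¬e.IsDiag) :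
    IsAlt (matchingMatrix (F := F) M) := by
  have hne : ∀ {i j}, s(i, j) ∈ M → i ≠ j := fun h hij =>
    hdiag _ h (Sym2.mk_isDiag_iff.2 hij)
  refine ⟨?_, fun i => if_neg fun h => hne h rfl⟩
  ext i j
  by_cases h : s(i, j) ∈ M
  · have h' : s(j, i) ∈ M := Sym2.eq_swap ▸ h
    rcases (hne h).lt_or_gt with hij | hij <;>
      simp [matchingMatrix, h, h', hij, hij.not_gt]
  · have h' : s(j, i) ∉ M := Sym2.eq_swap ▸ h
    simp [matchingMatrix, h, h']

theorem single_mem_range_matchingMatrix {M : Finset (Sym2 (Fin n))} (hM : IsGraphMatching M)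
    (hdiag : ∀ e ∈ M, ¬e.IsDiag) {i k : Fin n} (h : s(i, k) ∈ M) :
    (Pi.single i 1 : Fin n → F) ∈ LinearMap.range (matchingMatrix (F := F) M).mulVecLin := by
  have hcol : (matchingMatrix (F := F) M).mulVecLin (Pi.single k 1) =
      matchingMatrix (F := F) M i k • (Pi.single i 1 : Fin n → F) := by
    ext r
    rw [Matrix.mulVecLin_apply, Matrix.mulVec_single_one]
    by_cases hr : r = i
    · simp [hr]
    · simp only [Pi.smul_apply, Pi.single_apply, hr, if_false, smul_zero]
      by_contra hne
      have heq := hM.eq_of_mem (mem_of_matchingMatrix_apply_ne_zero hne) h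
        (Sym2.mem_mk_right r k) (Sym2.mem_mk_right i k)
      rcases Sym2.eq_iff.1 heq with ⟨rfl, -⟩ | ⟨rfl, rfl⟩
      · exact hr rfl
      · exact hdiag _ h (Sym2.mk_isDiag_iff.2 rfl)
  refine ⟨(matchingMatrix (F := F) M i k)⁻¹ • (Pi.single k 1 : Fin n → F), ?_⟩
  rw [map_smul, hcol, smul_smul, inv_mul_cancel₀ (matchingMatrix_apply_ne_zero h), one_smul]

theorem two_mul_card_le_rank_matchingMatrix {M : Finset (Sym2 (Fin n))} (hM : IsGraphMatching M)
    (hdiag : ∀ e ∈ M, ¬e.IsDiag) : 2 * #M ≤ (matchingMatrix (F := F) M).rank := by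
  have hout : ∀ e : Sym2 (Fin n), s(e.out.1, e.out.2) = e := Quot.out_eq
  let v : M × Bool → Fin n := fun p => if p.2 then p.1.1.out.1 else p.1.1.out.2
  have hedge : ∀ p, ∃ k, s(v p, k) = p.1.1 := by
    rintro ⟨e, _ | _⟩
    · exact ⟨e.1.out.1, Sym2.eq_swap.trans (hout e)⟩
    · exact ⟨e.1.out.2, hout e⟩
  have hinj : Function.Injective v := by
    intro p q hpq
    obtain ⟨k, hk⟩ := hedge p
    obtain ⟨l, hl⟩ := hedge q
    have he : p.1 = q.1 := Subtype.ext <| hM.eq_of_mem p.1.2 q.1.2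
      (hk ▸ Sym2.mem_mk_left _ _) (hpq ▸ hl ▸ Sym2.mem_mk_left _ _)
    obtain ⟨⟨e, he'⟩, b⟩ := p
    obtain ⟨⟨f, hf'⟩, c⟩ := q
    cases he
    refine Prod.ext rfl ?_
    by_contra hbc
    have hdiag' := hdiag e he'
    rw [← hout e, Sym2.mk_isDiag_iff] at hdiag'
    cases b <;> cases c <;> simp_all [v]
  have hli := (Pi.basisFun F (Fin n)).linearIndependent.comp v hinj
  calc 2 * #M = Fintype.card (M × Bool) := by simp [mul_comm]
    _ = Module.finrank F (Submodule.span F (Set.range (Pi.basisFun F (Fin n) ∘ v))) :=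
      (finrank_span_eq_card hli).symm
    _ ≤ (matchingMatrix (F := F) M).rank := by
      refine Submodule.finrank_mono (Submodule.span_le.2 (Set.range_subset_iff.2 fun p => ?_))
      obtain ⟨k, hk⟩ := hedge p
      simpa using single_mem_range_matchingMatrix hM hdiag (hk ▸ p.1.2)

theorem rank_le_two_mul_nuG {G : Set (Sym2 (Fin n))} {A : Matrix (Fin n) (Fin n) F} (hA : IsAlt A)
    (hsupp : ∀ i j, i ≠ j → s(i, j) ∉ G → A i j = 0) : A.rank ≤ 2 * nuG G := by
  obtain ⟨S, hS, hdet⟩ := exists_card_eq_rank_det_submatrix_ne_zero hA.1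
  have hB : (A.submatrix ((↑) : S → Fin n) (↑))ᵀ = -A.submatrix ((↑) : S → Fin n) (↑) := by
    rw [transpose_submatrix, hA.1]; rfl
  obtain ⟨σ, hσ, hprod⟩ := exists_perm_not_hasOddCycle_of_det_ne_zero hB hdet
  have hentry : ∀ x : S, A x (σ x) ≠ 0 := fun x => prod_ne_zero_iff.1 hprod x (mem_univ x)
  have hfix : ∀ x, σ x ≠ x := fun x hx => hentry x (by rw [hx]; exact hA.2 x)
  obtain ⟨χ, hχ⟩ := σ.exists_zmod_two_coloring hfix hσ
  obtain ⟨M, hMedge, hM, hcard⟩ := exists_isGraphMatching_of_coloring Subtype.val_injective σ hχ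
  have hMG : ↑M ⊆ G := fun e he => by
    obtain ⟨x, rfl⟩ := hMedge e he
    by_contra hx
    exact hentry x (hsupp _ _ (Subtype.val_injective.ne (hfix x).symm) hx)
  rw [← hS, ← Fintype.card_coe, ← hcard]
  exact Nat.mul_le_mul_left 2 (card_le_nuG hMG hM)

end Matching

theorem stmt9 {F : Type*} [Field F] {n : ℕ} (G : Set (Sym2 (Fin n)))
    (hG : ∀ e ∈ G, ¬ e.IsDiag) :
    sSup {r | ∃ A : Matrix (Fin n) (Fin n) F, IsAlt A ∧
        (∀ i j, i ≠ j → Sym2.mk i j ∉ G → A i j = 0) ∧ A.rank = r}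
      = 2 * nuG G := by
  set ranks := {r | ∃ A : Matrix (Fin n) (Fin n) F, IsAlt A ∧
    (∀ i j, i ≠ j → Sym2.mk i j ∉ G → A i j = 0) ∧ A.rank = r}
  obtain ⟨M, hMG, hM, hcard⟩ := exists_isGraphMatching_card_eq_nuG G
  have hdiag : ∀ e ∈ M, ¬e.IsDiag := fun e he => hG e (hMG he)
  have hupper : ∀ r ∈ ranks, r ≤ 2 * nuG G := by
    rintro r ⟨A, hA, hsupp, rfl⟩
    exact rank_le_two_mul_nuG hA hsupp
  have hwitness : (matchingMatrix (F := F) M).rank ∈ ranks :=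
    ⟨_, isAlt_matchingMatrix hdiag, fun i j _ hij => by_contra fun h =>
      hij (hMG (mem_of_matchingMatrix_apply_ne_zero h)), rfl⟩
  refine le_antisymm (csSup_le ⟨_, hwitness⟩ hupper) ?_
  calc 2 * nuG G = 2 * #M := by rw [hcard]
    _ ≤ (matchingMatrix (F := F) M).rank := two_mul_card_le_rank_matchingMatrix hM hdiag
    _ ≤ sSup ranks := le_csSup ⟨_, hupper⟩ hwitness
end

section
/- Let F be a field with char F ≠ 2 and let W ≤ M_2(F) be a 2-dimensional subspace such that every A ∈ W has permanental rank at most 1 (i.e., the permanent of every A ∈ W is 0 and W ≠ 0). Then W = W_u or W = W_uᵗ for some nonzero u = (a,b) ∈ F², where W_u = {[[ax, ay],[-bx, by]] : x,y ∈ F}. -/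
open Matrix

/-!
Negating the `(1, 0)` entry turns the permanent of a `2 × 2` matrix into its determinant, so a
matrix with vanishing permanent is, after this twist, of rank at most one: it is
`!![a * x, a * y; -(b * x), b * y]` for some `(a, b)` and `(x, y)`. For two such matrices the
permanent of their sum is `(a * d - b * c) * (x * y' - x' * y)`, so the two `u`'s or the two
`(x, y)`'s are proportional. Fixing a nonzero `M ∈ W`, every element of `W` therefore lies in
`W_u` or in `W_vᵗ` (with `u`, `v` read off `M`), and a subspace covered by two subspaces lies in
one of them. Both have dimension at most two, so equality follows from `dim W = 2`.
-/

open Module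

section PermanentOfTwoByTwo

variable {F : Type*} [Field F]

lemma per_fin_two (A : Matrix (Fin 2) (Fin 2) F) : per A = A 0 0 * A 1 1 + A 0 1 * A 1 0 := by
  rw [per, show (Finset.univ : Finset (Equiv.Perm (Fin 2))) = {1, Equiv.swap 0 1} by decide,
    Finset.sum_pair (by decide)]
  simp [Fin.prod_univ_two]

lemma le_prk_of_per_ne_zero {n : ℕ} (A : Matrix (Fin n) (Fin n) F) (h : per A ≠ 0) :
    n ≤ prk A := by
  refine le_csSup ⟨n, fun k ⟨I, _, hI, _⟩ => ?_⟩ ⟨id, id, strictMono_id, strictMono_id, ?_⟩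
  · simpa using Fintype.card_le_of_injective I hI.injective
  · rwa [A.submatrix_id_id]

lemma exists_eq_smul_of_mul_eq_mul {p q r s : F} (hpq : (p, q) ≠ (0, 0)) (h : p * s = q * r) :
    ∃ μ, r = μ * p ∧ s = μ * q := by
  by_cases hp : p = 0
  · have hq : q ≠ 0 := by rintro rfl; exact hpq (by rw [hp])
    subst hp
    refine ⟨s / q, ?_, by field_simp⟩
    simpa [hq] using h.symm
  · exact ⟨r / p, by field_simp, by field_simp; linear_combination h⟩

/-- The element of `W_u`, `u = (a, b)`, with coordinates `(x, y)`. -/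
def wuMat (a b x y : F) : Matrix (Fin 2) (Fin 2) F := !![a * x, a * y; -(b * x), b * y]

lemma ne_zero_of_wuMat_ne_zero {a b x y : F} (h : wuMat a b x y ≠ 0) :
    (a, b) ≠ (0, 0) ∧ (x, y) ≠ (0, 0) := by
  constructor <;> rintro ⟨⟩ <;> exact h (by ext i j; fin_cases i <;> fin_cases j <;> simp [wuMat])

lemma wuMat_transpose (a b x y : F) : (wuMat a b x y)ᵀ = wuMat x (-y) a (-b) := by
  ext i j; fin_cases i <;> fin_cases j <;> simp [wuMat] <;> ring

lemma per_wuMat_add (a b c d x y x' y' : F) :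
    per (wuMat a b x y + wuMat c d x' y') = (a * d - b * c) * (x * y' - x' * y) := by
  simp only [per_fin_two, wuMat, Matrix.add_apply, Matrix.of_apply, Matrix.cons_val',
    Matrix.cons_val_zero, Matrix.cons_val_one, Matrix.empty_val', Matrix.cons_val_fin_one]
  ring

lemma exists_eq_wuMat_of_per_eq_zero {M : Matrix (Fin 2) (Fin 2) F} (h : per M = 0) :
    ∃ a b x y, M = wuMat a b x y := by
  rw [per_fin_two] at h
  by_cases hcol : (M 0 0, -M 1 0) = (0, 0)
  · simp only [Prod.mk.injEq, neg_eq_zero] at hcol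
    refine ⟨M 0 1, M 1 1, 0, 1, ?_⟩
    ext i j; fin_cases i <;> fin_cases j <;> simp [wuMat, hcol]
  · obtain ⟨y, h01, h11⟩ := exists_eq_smul_of_mul_eq_mul hcol (r := M 0 1) (s := M 1 1)
      (by linear_combination h)
    refine ⟨M 0 0, -M 1 0, 1, y, ?_⟩
    ext i j; fin_cases i <;> fin_cases j <;> simp [wuMat, h01, h11, mul_comm]

/-- `W_u` for `u = (a, b)`. -/
def wu (a b : F) : Submodule F (Matrix (Fin 2) (Fin 2) F) :=
  Submodule.span F {!![a, 0; -b, 0], !![0, a; 0, b]}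

/-- `W_uᵗ` for `u = (a, b)`. -/
def wuT (a b : F) : Submodule F (Matrix (Fin 2) (Fin 2) F) :=
  (wu a b).map (Matrix.transposeLinearEquiv (Fin 2) (Fin 2) F F : _ →ₗ[F] _)

lemma mem_wu {a b : F} {M : Matrix (Fin 2) (Fin 2) F} :
    M ∈ wu a b ↔ ∃ x y, M = wuMat a b x y := by
  have hcomb : ∀ x y : F, x • !![a, 0; -b, 0] + y • !![0, a; 0, b] = wuMat a b x y := by
    intro x y; ext i j; fin_cases i <;> fin_cases j <;> simp [wuMat, mul_comm]
  simp only [wu, Submodule.mem_span_pair, hcomb, eq_comm]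

lemma mem_wuT {a b : F} {M : Matrix (Fin 2) (Fin 2) F} : M ∈ wuT a b ↔ Mᵀ ∈ wu a b := by
  simp [wuT]

lemma finrank_wu_le (a b : F) : finrank F (wu a b) ≤ 2 := by
  classical
  calc finrank F (wu a b)
      = Set.finrank F (({!![a, 0; -b, 0], !![0, a; 0, b]} : Finset _) :
          Set (Matrix (Fin 2) (Fin 2) F)) := by
        rw [Finset.coe_pair]; rfl
    _ ≤ _ := finrank_span_finset_le_card _
    _ ≤ 2 := Finset.card_le_two

lemma finrank_wuT_le (a b : F) : finrank F (wuT a b) ≤ 2 :=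
  (LinearEquiv.finrank_map_eq _ _).trans_le (finrank_wu_le a b)

lemma wuMat_mem_wu {a b c d : F} (hab : (a, b) ≠ (0, 0)) (h : a * d = b * c) (x y : F) :
    wuMat c d x y ∈ wu a b := by
  obtain ⟨μ, rfl, rfl⟩ := exists_eq_smul_of_mul_eq_mul hab h
  exact mem_wu.2 ⟨μ * x, μ * y, by simp only [wuMat]; ring_nf⟩

lemma wuMat_mem_wuT {x y x' y' : F} (hxy : (x, y) ≠ (0, 0)) (h : x * y' = x' * y) (c d : F) :
    wuMat c d x' y' ∈ wuT x (-y) := by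
  rw [mem_wuT, wuMat_transpose]
  exact wuMat_mem_wu (by simpa using hxy) (by linear_combination -h) _ _

theorem exists_le_wu_or_le_wuT {W : Submodule F (Matrix (Fin 2) (Fin 2) F)} (hW : W ≠ ⊥)
    (hper : ∀ A ∈ W, per A = 0) :
    ∃ a b : F, (a, b) ≠ (0, 0) ∧ (W ≤ wu a b ∨ W ≤ wuT a b) := by
  obtain ⟨M, hMW, hM⟩ := Submodule.exists_mem_ne_zero_of_ne_bot hW
  obtain ⟨a, b, x, y, rfl⟩ := exists_eq_wuMat_of_per_eq_zero (hper _ hMW)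
  obtain ⟨hab, hxy⟩ := ne_zero_of_wuMat_ne_zero hM
  have hcover : (W : Set (Matrix (Fin 2) (Fin 2) F)) ⊆ wu a b ∪ wuT x (-y) := by
    intro N hNW
    obtain ⟨c, d, x', y', rfl⟩ := exists_eq_wuMat_of_per_eq_zero (hper _ hNW)
    have hsum := hper _ (W.add_mem hMW hNW)
    rw [per_wuMat_add] at hsum
    rcases mul_eq_zero.1 hsum with h | h
    · exact Or.inl (wuMat_mem_wu hab (sub_eq_zero.1 h) _ _)
    · exact Or.inr (wuMat_mem_wuT hxy (sub_eq_zero.1 h) _ _)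
  rcases AddSubgroupClass.subset_union.1 hcover with h | h
  · exact ⟨a, b, hab, Or.inl h⟩
  · exact ⟨x, -y, by simpa using hxy, Or.inr h⟩

end PermanentOfTwoByTwo

theorem stmt16_general {F : Type*} [Field F]
    (W : Submodule F (Matrix (Fin 2) (Fin 2) F))
    (hdim : Module.finrank F W = 2)
    (hprk : ∀ A ∈ W, prk A ≤ 1) :
    ∃ a b : F, (a, b) ≠ (0, 0) ∧
      ((W : Set (Matrix (Fin 2) (Fin 2) F))
          = {M | ∃ x y : F, M = !![a * x, a * y; -(b * x), b * y]} ∨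
       (W : Set (Matrix (Fin 2) (Fin 2) F))
          = {M | ∃ x y : F, M = (!![a * x, a * y; -(b * x), b * y])ᵀ}) := by
  have hW : W ≠ ⊥ := by rintro rfl; simp at hdim
  have hper : ∀ A ∈ W, per A = 0 := fun A hA =>
    by_contra fun h => absurd ((le_prk_of_per_ne_zero A h).trans (hprk A hA)) (by decide)
  obtain ⟨a, b, hab, hle | hle⟩ := exists_le_wu_or_le_wuT hW hper
  · refine ⟨a, b, hab, Or.inl ?_⟩
    rw [Submodule.eq_of_le_of_finrank_le hle ((finrank_wu_le a b).trans hdim.ge)]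
    ext M
    exact mem_wu
  · refine ⟨a, b, hab, Or.inr ?_⟩
    rw [Submodule.eq_of_le_of_finrank_le hle ((finrank_wuT_le a b).trans hdim.ge)]
    ext M
    simp only [SetLike.mem_coe, mem_wuT, mem_wu, ← transpose_inj (A := Mᵀ), transpose_transpose]
    rfl

theorem stmt16 {F : Type*} [Field F] (hc : ringChar F ≠ 2)
    (W : Submodule F (Matrix (Fin 2) (Fin 2) F))
    (hdim : Module.finrank F W = 2)
    (hprk : ∀ A ∈ W, prk A ≤ 1) :
    ∃ a b : F, (a, b) ≠ (0, 0) ∧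
      ((W : Set (Matrix (Fin 2) (Fin 2) F))
          = {M | ∃ x y : F, M = !![a * x, a * y; -(b * x), b * y]} ∨
       (W : Set (Matrix (Fin 2) (Fin 2) F))
          = {M | ∃ x y : F, M = (!![a * x, a * y; -(b * x), b * y])ᵀ}) :=
  stmt16_general W hdim hprk
end
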